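/- arXiv:1711.04523 — 11 statements merged into one kernel-verified Lean document; each statement's English description precedes it below -/
import Mathlib

section
/- For every integer n ≥ 2 and every monic real polynomial q of degree 2n-2, one has sup_{t ∈ [-1,1]} |(1-t²) q(t)| ≥ 2^{1-2n} / cos^{2n}(π/(4n)). Moreover, the function t ↦ -2^{1-2n} cos^{-2n}(π/(4n)) · T_{2n}(cos(π/(4n)) t), where T_{2n} is the Chebyshev polynomial of the first kind of degree 2n, equals (1-t²) q₀(t) for some monic polynomial q₀ of degree 2n-2, and its supremum norm on [-1,1] equals exactly 2^{1-2n} / cos^{2n}(π/(4n)). -/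
open Polynomial Real

/-!
Write `c = cos (π / (4n))` and `M = 2^{1-2n} / c^{2n}`. The polynomial `P(t) = M·T_{2n}(c t)` is
monic of degree `2n`, bounded by `M` on `[-1, 1]`, and vanishes at `±1` because `±c` are the
outermost zeros of `T_{2n}`; hence `P = (t² - 1) q₀` with `q₀` monic of degree `2n - 2`. At the
`2n - 1` points `t_k = cos (kπ / (2n)) / c`, `0 < k < 2n`, which lie in `(-1, 1)`, `P` takes the
values `(-1)^k M`. If `|(1 - t²) q(t)| < M` on `[-1, 1]` for a monic `q` of degree `2n - 2`, then
`q₀ - q` alternates in sign at these points and so has `2n - 2` roots, although its degree is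
smaller than `2n - 2`.
-/

theorem Polynomial.le_natDegree_of_alternating {p : ℝ[X]} {x : ℕ → ℝ} {m : ℕ}
    (hx : StrictAntiOn x (Set.Iic m)) (hp : ∀ k ≤ m, 0 < (-1) ^ k * p.eval (x k)) :
    m ≤ p.natDegree := by
  have hroot : ∀ k < m, ∃ r ∈ Set.Ioo (x (k + 1)) (x k), p.IsRoot r := by
    intro k hk
    have hlt : x (k + 1) < x k := hx (Set.mem_Iic.2 hk.le) (Set.mem_Iic.2 hk) k.lt_succ_self
    have h₀ := hp k hk.le
    have h₁ := hp (k + 1) hk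
    rw [pow_succ] at h₁
    rcases neg_one_pow_eq_or ℝ k with h | h <;> rw [h] at h₀ h₁
    · exact intermediate_value_Ioo hlt.le p.continuous.continuousOn ⟨by linarith, by linarith⟩
    · exact intermediate_value_Ioo' hlt.le p.continuous.continuousOn ⟨by linarith, by linarith⟩
  choose! r hr hroot using hroot
  have hr_anti : StrictAntiOn r (Set.Iio m) := fun i hi j hj hij =>
    calc r j < x j := (hr j hj).2
      _ ≤ x (i + 1) := hx.antitoneOn (Set.mem_Iic.2 hi) (Set.mem_Iic.2 hj.le) hij
      _ < r i := (hr i hi).1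
  have hp₀ : p ≠ 0 := by
    rintro rfl
    simpa using hp 0 m.zero_le
  calc m = ((Finset.range m).image r).card := by
        rw [Finset.card_image_of_injOn (hr_anti.injOn.mono (by simp)), Finset.card_range]
    _ ≤ p.natDegree := card_le_degree_of_subset_roots fun z hz => by
        simp only [Finset.mem_val, Finset.mem_image, Finset.mem_range] at hz
        obtain ⟨k, hk, rfl⟩ := hz
        exact (mem_roots hp₀).2 (hroot k hk)

theorem Polynomial.X_sq_sub_one_dvd {K : Type*} [Field K] [NeZero (2 : K)] {p : K[X]}
    (h₁ : p.IsRoot 1) (h₂ : p.IsRoot (-1)) : X ^ 2 - 1 ∣ p := by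
  have hcop : IsCoprime (X - C (1 : K)) (X - C (-1)) := by
    refine isCoprime_X_sub_C_of_isUnit_sub ?_
    rw [sub_neg_eq_add, one_add_one_eq_two]
    exact two_ne_zero.isUnit
  have h := hcop.mul_dvd (dvd_iff_isRoot.2 h₁) (dvd_iff_isRoot.2 h₂)
  rwa [show (X - C (1 : K)) * (X - C (-1)) = X ^ 2 - 1 by rw [C_neg, C_1]; ring] at h

theorem Polynomial.isMonicOfDegree_X_sq_sub_one {R : Type*} [Ring R] [Nontrivial R] :
    IsMonicOfDegree (X ^ 2 - 1 : R[X]) 2 :=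
  (isMonicOfDegree_X_pow (R := R) 2).sub (by simp)

theorem Real.abs_cos_lt_cos {a b : ℝ} (hb : 0 ≤ b) (ha : a ∈ Set.Ioo b (π - b)) :
    |cos a| < cos b := by
  have hbπ : b ∈ Set.Icc 0 π := ⟨hb, by linarith [ha.1, ha.2]⟩
  have hlt : ∀ y ∈ Set.Ioo b (π - b), cos y < cos b := fun y hy =>
    strictAntiOn_cos hbπ ⟨by linarith [hy.1], by linarith [hy.2]⟩ hy.1
  refine abs_lt.2 ⟨?_, hlt a ha⟩
  have := hlt (π - a) ⟨by linarith [ha.2], by linarith [ha.1]⟩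
  rw [cos_pi_sub] at this
  linarith

namespace ConstrainedChebyshev

open Polynomial.Chebyshev

noncomputable def scale (n : ℕ) : ℝ := cos (π / (4 * n))

/-- The factor that makes `extremal n` monic. -/
noncomputable def minNorm (n : ℕ) : ℝ := 2 ^ (1 - 2 * (n : ℤ)) / scale n ^ (2 * n)

noncomputable def extremal (n : ℕ) : ℝ[X] :=
  C (minNorm n) * (T ℝ (2 * n)).comp (C (scale n) * X)

variable {n : ℕ}

theorem scale_pos : 0 < scale n := by
  rcases n.eq_zero_or_pos with rfl | hn
  · simp [scale]
  have hpos : 0 < π / (4 * n) := by positivity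
  have h4n : (4 : ℝ) ≤ 4 * n := by norm_cast; omega
  refine cos_pos_of_mem_Ioo ⟨by linarith [pi_pos], ?_⟩
  calc π / (4 * n) ≤ π / 4 := div_le_div_of_nonneg_left pi_pos.le (by norm_num) h4n
    _ < π / 2 := by linarith [pi_pos]

theorem minNorm_pos : 0 < minNorm n := by
  have := scale_pos (n := n)
  unfold minNorm
  positivity

theorem eval_extremal (t : ℝ) :
    (extremal n).eval t = minNorm n * (T ℝ (2 * n)).eval (scale n * t) := by
  simp [extremal, eval_comp]

theorem isMonicOfDegree_extremal (hn : n ≠ 0) : IsMonicOfDegree (extremal n) (2 * n) := by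
  have hc := (scale_pos (n := n)).ne'
  have hlin : (C (scale n) * X).natDegree = 1 := by rw [natDegree_C_mul hc, natDegree_X]
  have hdeg : (extremal n).natDegree = 2 * n := by
    rw [extremal, natDegree_C_mul minNorm_pos.ne', natDegree_comp, hlin, natDegree_T]
    omega
  refine ⟨hdeg, ?_⟩
  have hlc : (C (scale n) * X).leadingCoeff = scale n := by simp
  rw [Monic, extremal, leadingCoeff_mul, leadingCoeff_C, leadingCoeff_comp (by rw [hlin]; simp),
    hlc, leadingCoeff_T, natDegree_T, show (2 * (n : ℤ)).natAbs = 2 * n by omega, minNorm]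
  have h2 : (2 : ℝ) ^ (2 * n - 1) = 2 ^ (2 * (n : ℤ) - 1) := by
    rw [← zpow_natCast, Nat.cast_sub (by omega)]
    push_cast
    rfl
  rw [h2]
  field_simp
  rw [← zpow_add₀ two_ne_zero]
  simp

theorem eval_T_scale (hn : n ≠ 0) : (T ℝ (2 * n)).eval (scale n) = 0 := by
  have : (2 * n : ℝ) * (π / (4 * n)) = π / 2 := by field_simp; ring
  rw [scale, T_real_cos]
  push_cast
  rw [this, cos_pi_div_two]

theorem eval_extremal_one (hn : n ≠ 0) : (extremal n).eval 1 = 0 := by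
  rw [eval_extremal, mul_one, eval_T_scale hn, mul_zero]

theorem eval_extremal_neg_one (hn : n ≠ 0) : (extremal n).eval (-1) = 0 := by
  rw [eval_extremal, mul_neg_one, T_eval_neg, eval_T_scale hn, mul_zero, mul_zero]

theorem exists_isMonicOfDegree_extremal_eq_mul (hn : n ≠ 0) :
    ∃ q₀ : ℝ[X], IsMonicOfDegree q₀ (2 * n - 2) ∧ extremal n = (X ^ 2 - 1) * q₀ := by
  obtain ⟨q₀, hq₀⟩ := X_sq_sub_one_dvd (eval_extremal_one hn) (eval_extremal_neg_one hn)
  refine ⟨q₀, isMonicOfDegree_X_sq_sub_one.of_mul_left ?_, hq₀⟩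
  rw [← hq₀, show 2 + (2 * n - 2) = 2 * n by omega]
  exact isMonicOfDegree_extremal hn

theorem abs_eval_extremal_le {t : ℝ} (ht : t ∈ Set.Icc (-1) 1) :
    |(extremal n).eval t| ≤ minNorm n := by
  have hct : |scale n * t| ≤ 1 := by
    rw [abs_mul, abs_of_pos scale_pos]
    exact mul_le_one₀ (cos_le_one _) (abs_nonneg t) (abs_le.2 ht)
  rw [eval_extremal, abs_mul, abs_of_pos minNorm_pos]
  exact mul_le_of_le_one_right minNorm_pos.le (abs_eval_T_real_le_one _ hct)

theorem abs_eval_extremal_zero : |(extremal n).eval 0| = minNorm n := by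
  simp [eval_extremal, abs_of_pos minNorm_pos]

theorem isGreatest_abs_eval_extremal :
    IsGreatest ((fun t => |(extremal n).eval t|) '' Set.Icc (-1) 1) (minNorm n) :=
  ⟨⟨0, by norm_num, abs_eval_extremal_zero⟩, by
    rintro _ ⟨t, ht, rfl⟩
    exact abs_eval_extremal_le ht⟩

theorem eval_extremal_node {j : ℕ} (hj : j ≤ 2 * n) :
    (extremal n).eval (node (2 * n) j / scale n) = minNorm n * (-1) ^ j := by
  have h := eval_T_real_node (Finset.mem_Iic.2 hj)
  push_cast at h
  rw [eval_extremal, mul_div_cancel₀ _ scale_pos.ne', h]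

theorem abs_node_lt_scale {j : ℕ} (hj₁ : 1 ≤ j) (hj₂ : j < 2 * n) :
    |node (2 * n) j| < scale n := by
  have hn : (0 : ℝ) < n := by exact_mod_cast (show 0 < n by omega)
  have hu : 0 < π / (4 * n) := by positivity
  have ha : (j : ℝ) * π / (2 * n : ℕ) = 2 * j * (π / (4 * n)) := by
    push_cast
    field_simp
    ring
  have hπ : π = 4 * n * (π / (4 * n)) := by field_simp
  have hj₁' : (1 : ℝ) ≤ j := by exact_mod_cast hj₁
  have hj₂' : (2 * j + 1 : ℝ) < 4 * n := by exact_mod_cast (show 2 * j + 1 < 4 * n by omega)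
  refine abs_cos_lt_cos hu.le ⟨?_, ?_⟩ <;> rw [ha]
  · nlinarith
  · nth_rewrite 2 [hπ]
    nlinarith

theorem neg_one_pow_mul_eval_sub_pos {q q₀ : ℝ[X]} (hfac : extremal n = (X ^ 2 - 1) * q₀)
    (hq : ∀ t ∈ Set.Icc (-1) 1, |(1 - t ^ 2) * q.eval t| < minNorm n) {k : ℕ}
    (hk : k + 1 < 2 * n) :
    0 < (-1) ^ k * (q₀ - q).eval (node (2 * n) (k + 1) / scale n) := by
  set t := node (2 * n) (k + 1) / scale n
  have ht : |t| < 1 := by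
    rw [abs_div, abs_of_pos scale_pos, div_lt_one scale_pos]
    exact abs_node_lt_scale (by omega) hk
  have ht₂ : 0 < 1 - t ^ 2 := by nlinarith [sq_abs t, abs_nonneg t]
  have hsq : ((-1 : ℝ) ^ k) ^ 2 = 1 := by rw [← pow_mul, mul_comm, pow_mul]; norm_num
  have hq₀ : (1 - t ^ 2) * q₀.eval t = (-1) ^ k * minNorm n := by
    have h := eval_extremal_node (n := n) hk.le
    rw [hfac] at h
    simp only [eval_mul, eval_sub, eval_pow, eval_X, eval_one, pow_succ] at h
    linear_combination -h
  have hqt : (-1) ^ k * ((1 - t ^ 2) * q.eval t) < minNorm n := by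
    calc _ ≤ |(-1) ^ k * ((1 - t ^ 2) * q.eval t)| := le_abs_self _
      _ = |(1 - t ^ 2) * q.eval t| := by rw [abs_mul, abs_neg_one_pow, one_mul]
      _ < minNorm n := hq t (Set.mem_Icc_of_Ioo (abs_lt.1 ht))
  refine pos_of_mul_pos_right (a := 1 - t ^ 2) ?_ ht₂.le
  rw [eval_sub]
  linear_combination -(-1) ^ k * hq₀ + hqt - minNorm n * hsq

theorem minNorm_le_sSup (hn : 2 ≤ n) {q : ℝ[X]} (hq : IsMonicOfDegree q (2 * n - 2)) :
    minNorm n ≤ sSup ((fun t => |(1 - t ^ 2) * q.eval t|) '' Set.Icc (-1) 1) := by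
  obtain ⟨q₀, hq₀, hfac⟩ := exists_isMonicOfDegree_extremal_eq_mul (n := n) (by omega)
  by_contra! hlt
  have hbdd : BddAbove ((fun t => |(1 - t ^ 2) * q.eval t|) '' Set.Icc (-1) 1) :=
    (isCompact_Icc.image (by fun_prop)).bddAbove
  have hsmall : ∀ t ∈ Set.Icc (-1) 1, |(1 - t ^ 2) * q.eval t| < minNorm n := fun t ht =>
    (le_csSup hbdd (Set.mem_image_of_mem _ ht)).trans_lt hlt
  have hdeg : (q₀ - q).natDegree < 2 * n - 2 := hq₀.natDegree_sub_lt (by omega) hq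
  refine hdeg.not_ge (le_natDegree_of_alternating (x := fun k => node (2 * n) (k + 1) / scale n)
    (fun i hi j hj hij => ?_) fun k hk => neg_one_pow_mul_eval_sub_pos hfac hsmall (by omega))
  exact div_lt_div_of_pos_right (node_lt (by rw [Set.mem_Iic] at hj; omega) (by omega)) scale_pos

end ConstrainedChebyshev

open ConstrainedChebyshev

/-- For every integer `n ≥ 2` and every monic real polynomial `q` of degree `2n-2`,
`sup_{t ∈ [-1,1]} |(1-t²) q(t)| ≥ 2^{1-2n} / cos^{2n}(π/(4n))`. Moreover the function
`t ↦ -2^{1-2n} cos^{-2n}(π/(4n)) · T_{2n}(cos(π/(4n)) t)` equals `(1-t²) q₀(t)` for a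
monic polynomial `q₀` of degree `2n-2`, and its sup norm on `[-1,1]` equals exactly
`2^{1-2n} / cos^{2n}(π/(4n))`. -/
theorem constrained_chebyshev_minimal (n : ℕ) (hn : 2 ≤ n) :
    (∀ q : ℝ[X], q.Monic → q.natDegree = 2 * n - 2 →
      (2:ℝ) ^ (1 - 2 * (n:ℤ)) / Real.cos (π / (4 * n)) ^ (2 * n) ≤
        sSup ((fun t => |(1 - t ^ 2) * q.eval t|) '' Set.Icc (-1:ℝ) 1)) ∧
    ∃ q₀ : ℝ[X], q₀.Monic ∧ q₀.natDegree = 2 * n - 2 ∧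
      (∀ t : ℝ,
        -((2:ℝ) ^ (1 - 2 * (n:ℤ)) / Real.cos (π / (4 * n)) ^ (2 * n)) *
            (Polynomial.Chebyshev.T ℝ (2 * n)).eval (Real.cos (π / (4 * n)) * t) =
          (1 - t ^ 2) * q₀.eval t) ∧
      sSup ((fun t => |(1 - t ^ 2) * q₀.eval t|) '' Set.Icc (-1:ℝ) 1) =
        (2:ℝ) ^ (1 - 2 * (n:ℤ)) / Real.cos (π / (4 * n)) ^ (2 * n) := by
  obtain ⟨q₀, hq₀, hfac⟩ := exists_isMonicOfDegree_extremal_eq_mul (n := n) (by omega)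
  have heval (t : ℝ) : (1 - t ^ 2) * q₀.eval t = -(extremal n).eval t := by
    rw [hfac, eval_mul]
    simp only [eval_sub, eval_pow, eval_X, eval_one]
    ring
  refine ⟨fun q hq hqd => minNorm_le_sSup hn ⟨hqd, hq⟩, q₀, hq₀.monic, hq₀.natDegree_eq,
    fun t => ?_, ?_⟩
  · rw [heval, eval_extremal, neg_mul]
    rfl
  · simp_rw [heval, abs_neg]
    exact isGreatest_abs_eval_extremal.csSup_eq
end

section
/- For every integer n ≥ 3, the polynomial ζ(λ) := λⁿ - (n/(n-2)) λ^{n-1} - (n/(n-2)) λ + 1 has exactly one root in the open interval (0,1). In particular, ζ(0) = 1 > 0 and ζ(1) = -4/(n-2) < 0. -/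
/-!
With `c = n/(n-2)` we have `c (n-1) ≥ n`, so on `(0,1)` the derivative
`n λ^{n-1} - c (n-1) λ^{n-2} - c ≤ n λ^{n-2} - c (n-1) λ^{n-2} - c` is negative:
`ζ` is strictly decreasing on `[0,1]` from `ζ 0 = 1` to `ζ 1 = 2 - 2c < 0`,
and the intermediate value theorem gives exactly one root.
-/

open Set

theorem existsUnique_mem_Ioo_eq_zero_of_strictAntiOn {f : ℝ → ℝ} {a b : ℝ} (hab : a ≤ b)
    (hf : ContinuousOn f (Icc a b)) (hanti : StrictAntiOn f (Icc a b))
    (ha : 0 < f a) (hb : f b < 0) : ∃! x, x ∈ Ioo a b ∧ f x = 0 := by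
  obtain ⟨x, hx, hfx⟩ := intermediate_value_Ioo' hab hf ⟨hb, ha⟩
  refine ⟨x, ⟨hx, hfx⟩, fun y ⟨hy, hfy⟩ => ?_⟩
  exact hanti.injOn (Ioo_subset_Icc_self hy) (Ioo_subset_Icc_self hx) (hfy.trans hfx.symm)

noncomputable def zetaFun (n : ℕ) (c x : ℝ) : ℝ := x ^ n - c * x ^ (n - 1) - c * x + 1

section

variable {n : ℕ} {c : ℝ}

theorem zetaFun_zero (hn : 2 ≤ n) : zetaFun n c 0 = 1 := by
  simp [zetaFun, show n ≠ 0 by omega, show n - 1 ≠ 0 by omega]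

theorem zetaFun_one : zetaFun n c 1 = 2 - 2 * c := by
  simp only [zetaFun, one_pow, mul_one]
  ring

theorem hasDerivAt_zetaFun (x : ℝ) :
    HasDerivAt (zetaFun n c) (n * x ^ (n - 1) - c * ((n - 1 : ℕ) * x ^ (n - 2)) - c) x := by
  have hpow : HasDerivAt (fun x : ℝ => x ^ (n - 1)) ((n - 1 : ℕ) * x ^ (n - 2)) x := by
    simpa only [Nat.sub_sub] using hasDerivAt_pow (n - 1) x
  show HasDerivAt (fun x => x ^ n - c * x ^ (n - 1) - c * x + 1) _ x
  simpa using
    (((hasDerivAt_pow n x).sub (hpow.const_mul c)).sub ((hasDerivAt_id x).const_mul c)).add_const 1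

theorem one_lt_of_le_mul_sub_one (hn : 2 ≤ n) (hc : n ≤ c * (n - 1)) : 1 < c := by
  by_contra! h
  have : (1 : ℝ) ≤ n - 1 := by rw [le_sub_iff_add_le]; exact_mod_cast (by omega : 1 + 1 ≤ n)
  nlinarith

theorem zetaFun_strictAntiOn (hn : 2 ≤ n) (hc : n ≤ c * (n - 1)) :
    StrictAntiOn (zetaFun n c) (Icc 0 1) := by
  have hc0 : 0 < c := one_pos.trans (one_lt_of_le_mul_sub_one hn hc)
  refine strictAntiOn_of_deriv_neg (convex_Icc 0 1)
    (fun x _ => (hasDerivAt_zetaFun x).continuousAt.continuousWithinAt) fun x hx => ?_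
  rw [interior_Icc] at hx
  rw [(hasDerivAt_zetaFun x).deriv, Nat.cast_sub (by omega : 1 ≤ n), Nat.cast_one]
  have hpow : x ^ (n - 1) = x ^ (n - 2) * x := by
    rw [← pow_succ]; congr 1; omega
  have hxn : 0 ≤ x ^ (n - 2) := pow_nonneg hx.1.le _
  have hlead : (n : ℝ) * x ^ (n - 1) ≤ c * ((n - 1) * x ^ (n - 2)) := by
    rw [hpow]
    calc (n : ℝ) * (x ^ (n - 2) * x) ≤ n * x ^ (n - 2) := by
          gcongr; exact mul_le_of_le_one_right hxn hx.2.le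
      _ ≤ c * ((n - 1) * x ^ (n - 2)) := by
          rw [← mul_assoc]; exact mul_le_mul_of_nonneg_right hc hxn
  linarith

theorem existsUnique_zetaFun_eq_zero (hn : 2 ≤ n) (hc : n ≤ c * (n - 1)) :
    ∃! x, x ∈ Ioo 0 1 ∧ zetaFun n c x = 0 := by
  have hc1 := one_lt_of_le_mul_sub_one hn hc
  refine existsUnique_mem_Ioo_eq_zero_of_strictAntiOn zero_le_one
    (fun x _ => (hasDerivAt_zetaFun x).continuousAt.continuousWithinAt)
    (zetaFun_strictAntiOn hn hc) ?_ ?_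
  · rw [zetaFun_zero hn]; exact one_pos
  · rw [zetaFun_one]; linarith

end

/-- For every integer `n ≥ 3`, the polynomial
`ζ(λ) = λⁿ - (n/(n-2)) λ^{n-1} - (n/(n-2)) λ + 1` has exactly one root in `(0,1)`.
In particular `ζ(0) = 1 > 0` and `ζ(1) = -4/(n-2) < 0`. -/
theorem unique_root_zeta (n : ℕ) (hn : 3 ≤ n) (ζ : ℝ → ℝ)
    (hζ : ∀ l : ℝ, ζ l = l ^ n - ((n : ℝ) / (n - 2)) * l ^ (n - 1) - ((n : ℝ) / (n - 2)) * l + 1) :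
    (∃! l : ℝ, l ∈ Set.Ioo (0:ℝ) 1 ∧ ζ l = 0) ∧
    ζ 0 = 1 ∧ ζ 1 = -4 / ((n : ℝ) - 2) ∧ -4 / ((n : ℝ) - 2) < 0 := by
  have hζ : ζ = zetaFun n (n / (n - 2)) := funext hζ
  have hn3 : (3 : ℝ) ≤ n := by exact_mod_cast hn
  have hd : (0 : ℝ) < n - 2 := by linarith
  have hc : (n : ℝ) ≤ n / (n - 2) * (n - 1) := by
    rw [div_mul_eq_mul_div, le_div_iff₀ hd]; nlinarith
  subst hζ
  refine ⟨existsUnique_zetaFun_eq_zero (by omega) hc, zetaFun_zero (by omega), ?_,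
    div_neg_of_neg_of_pos (by norm_num) hd⟩
  rw [zetaFun_one]
  field_simp
  ring
end

section
/- Let λ = (√3 - √2·3^{1/4} + 1)/2. Then the real number a = √(1 + √3 + √(24 + 14√3)) - (1 + √3 + √2·3^{1/4})/2 is the unique positive root of the quadratic equation λ²(2λ-1) x² + 2λ(2λ-1) x + (6λ³ + 6λ - 3) = 0. -/
open Real

set_option maxHeartbeats 800000

private lemma aux_kc (t u : ℝ) (h1 : 1.31 < t) (h2 : t < 1.32) (h3 : 1.41 < u) (h4 : u < 1.42) :
    ((1 + t ^ 2 + u * t) / 2) ^ 2 < 1 + t ^ 2 + u * t * (2 + t ^ 2) := by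
  have ht' : (0:ℝ) < t := by linarith
  have hu' : (0:ℝ) < u := by linarith
  have p1 : t ^ 2 < 1.7424 := by nlinarith
  have p3 : u ^ 2 < 2.0164 := by nlinarith
  have p2 : 0 < u * t := mul_pos hu' ht'
  have p4 : 0 < u * t ^ 3 := by positivity
  nlinarith [p1, p3, p2, p4, sq_nonneg t, mul_pos ht' ht']

private lemma aux_lpos (t u : ℝ) (h1 : 1.31 < t) (h2 : t < 1.32) (h3 : 1.41 < u) (h4 : u < 1.42) :
    0 < (t ^ 2 - u * t + 1) / 2 := by nlinarith

private lemma aux_2l1 (t u : ℝ) (h1 : 1.31 < t) (h2 : t < 1.32) (h3 : 1.41 < u) (h4 : u < 1.42) :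
    2 * ((t ^ 2 - u * t + 1) / 2) - 1 < 0 := by nlinarith

/-- With `λ = (√3 - √2·3^{1/4} + 1)/2`, the real number
`a = √(1 + √3 + √(24 + 14√3)) - (1 + √3 + √2·3^{1/4})/2` is the unique positive root of
`λ²(2λ-1) x² + 2λ(2λ-1) x + (6λ³ + 6λ - 3) = 0`. -/
theorem unique_positive_root_quadratic
    (l : ℝ) (hl : l = (Real.sqrt 3 - Real.sqrt 2 * (3:ℝ) ^ ((1:ℝ)/4) + 1) / 2)
    (a : ℝ) (ha : a = Real.sqrt (1 + Real.sqrt 3 + Real.sqrt (24 + 14 * Real.sqrt 3)) -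
      (1 + Real.sqrt 3 + Real.sqrt 2 * (3:ℝ) ^ ((1:ℝ)/4)) / 2) :
    (0 < a ∧ l ^ 2 * (2 * l - 1) * a ^ 2 + 2 * l * (2 * l - 1) * a + (6 * l ^ 3 + 6 * l - 3) = 0) ∧
      ∀ x : ℝ, 0 < x →
        l ^ 2 * (2 * l - 1) * x ^ 2 + 2 * l * (2 * l - 1) * x + (6 * l ^ 3 + 6 * l - 3) = 0 →
        x = a := by
  set t : ℝ := (3:ℝ) ^ ((1:ℝ)/4) with htdef
  set u : ℝ := Real.sqrt 2 with hudef
  have ht0 : 0 < t := Real.rpow_pos_of_pos (by norm_num) _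
  have ht4 : t ^ 4 = 3 := by
    rw [htdef, ← Real.rpow_natCast ((3:ℝ) ^ ((1:ℝ)/4)) 4, ← Real.rpow_mul (by norm_num)]
    norm_num
  have hu0 : 0 < u := Real.sqrt_pos.mpr (by norm_num)
  have hu2 : u ^ 2 = 2 := Real.sq_sqrt (by norm_num)
  have hs3 : Real.sqrt 3 = t ^ 2 := by
    rw [show (3:ℝ) = (t ^ 2) ^ 2 by nlinarith, Real.sqrt_sq (by positivity)]
  -- numeric bounds
  have htlb : 1.31 < t := by nlinarith [ht4, ht0, sq_nonneg (t - 1.31), sq_nonneg (t + 1.31), sq_nonneg (t^2 - 1.7161)]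
  have htub : t < 1.32 := by nlinarith [ht4, ht0, sq_nonneg (t - 1.32), sq_nonneg (t + 1.32), sq_nonneg (t^2 - 1.7424)]
  have hulb : 1.41 < u := by nlinarith [hu2, hu0]
  have huub : u < 1.42 := by nlinarith [hu2, hu0]
  rw [hs3] at hl ha
  have hw : Real.sqrt (24 + 14 * t ^ 2) = u * t * (2 + t ^ 2) := by
    rw [show (24:ℝ) + 14 * t ^ 2 = (u * t * (2 + t ^ 2)) ^ 2 by
      linear_combination (-8 - 2*t^2) * ht4 + (-(t^2*(2+t^2)^2)) * hu2]
    exact Real.sqrt_sq (by positivity)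
  rw [hw] at ha
  set v : ℝ := Real.sqrt (1 + t ^ 2 + u * t * (2 + t ^ 2)) with hvdef
  have hv0 : 0 ≤ v := Real.sqrt_nonneg _
  have hv2 : v ^ 2 = 1 + t ^ 2 + u * t * (2 + t ^ 2) :=
    Real.sq_sqrt (by positivity)
  -- basic facts about l
  have hl0 : 0 < l := by rw [hl]; exact aux_lpos t u htlb htub hulb huub
  have h2l1 : 2 * l - 1 < 0 := by rw [hl]; exact aux_2l1 t u htlb htub hulb huub
  have hA' : l * ((1 + t ^ 2 + u * t) / 2) = 1 := by
    rw [hl]; linear_combination (1/4) * ht4 + (-(t^2)/4) * hu2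
  have hkey : l ^ 2 * (2 * l - 1) * (1 + t ^ 2 + u * t * (2 + t ^ 2)) + 6 * l ^ 3 + 4 * l - 2 = 0 := by
    rw [hl]
    linear_combination (15/4 - u^2 - u^4/2 - 2*t*u + (7/4)*t*u^3 + (3/2)*t^2 - (7/4)*t^2*u^2
        - (1/4)*t^2*u^4 + (1/4)*t^3*u + (3/4)*t^3*u^3 + (1/4)*t^4 - (3/4)*t^4*u^2
        + (1/4)*t^5*u) * ht4
      + (-6 - (3/2)*u^2 + (21/4)*t*u - (9/2)*t^2 - (3/4)*t^2*u^2 + (9/4)*t^3*u) * hu2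
  have hc0 : 0 < (1 + t ^ 2 + u * t) / 2 := by positivity
  have ha0 : 0 < a := by
    have hclt : ((1 + t ^ 2 + u * t) / 2) ^ 2 < v ^ 2 := by
      rw [hv2]; exact aux_kc t u htlb htub hulb huub
    have : (1 + t ^ 2 + u * t) / 2 < v := lt_of_pow_lt_pow_left₀ 2 hv0 hclt
    rw [ha]; linarith
  have hk : (a + (1 + t ^ 2 + u * t) / 2) ^ 2 = 1 + t ^ 2 + u * t * (2 + t ^ 2) := by
    rw [ha]; rw [← hv2]; ring
  have hroot : l ^ 2 * (2 * l - 1) * a ^ 2 + 2 * l * (2 * l - 1) * a + (6 * l ^ 3 + 6 * l - 3) = 0 := by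
    linear_combination hkey + (l ^ 2 * (2 * l - 1)) * hk
      + (-2 * l * (2 * l - 1) * a - (2 * l - 1) * (l * ((1 + t ^ 2 + u * t) / 2) + 1)) * hA'
  refine ⟨⟨ha0, hroot⟩, fun x hx0 hxeq => ?_⟩
  have hfac : (x - a) * ((2 * l - 1) * (l ^ 2 * (x + a) + 2 * l)) = 0 := by
    linear_combination hxeq - hroot
  have hxa : 0 < x + a := by linarith
  have hpos : 0 < l ^ 2 * (x + a) + 2 * l := by
    nlinarith [mul_pos (mul_pos hl0 hl0) hxa]
  rcases mul_eq_zero.mp hfac with h | h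
  · linarith
  · exact absurd h (ne_of_lt (mul_neg_of_neg_of_pos h2l1 hpos))
end

section
/- Fix φ ∈ (0, π/2] and let ξ* = -√2·cos φ + √(2 + 2√2 + cos²φ). Let p₂ : [-1,1] → ℝ² be the quadratic Bézier curve p₂(t) = ((1-t)/2)² b₀ + 2((1+t)/2)((1-t)/2) b₁ + ((1+t)/2)² b₂ with control points b₀ = (cos φ, -sin φ), b₁ = (ξ*, 0), b₂ = (cos φ, sin φ), and set ψ₂(t) = ‖p₂(t)‖² - 1 (Euclidean norm). Then ψ₂(t) = 0 for t ∈ {-1, -√(3-2√2), √(3-2√2), 1}. -/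
open Real

/-!
On the symmetric quadratic Bézier curve with control points `(c, -s)`, `(ξ, 0)`, `(c, s)` the
coordinates are `x = ((1 + t²) c + (1 - t²) ξ) / 2` and `y = t s`. At `t = ±1` this is the unit
point `(c, ±s)`. At `t² = 3 - 2√2` the choice `ξ = -√2 c + S` with `S² = 2 + 2√2 + c²` cancels
`c` from `x`, leaving `x = (√2 - 1) S`, and `x² + y² = (3 - 2√2)(3 + 2√2) = 1`.
-/

lemma norm_sq_symmetric_quadratic_bezier (c s ξ t : ℝ) :
    ‖((1 - t) / 2) ^ 2 • (WithLp.toLp 2 ![c, -s] : EuclideanSpace ℝ (Fin 2)) +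
      (2 * ((1 + t) / 2) * ((1 - t) / 2)) • (WithLp.toLp 2 ![ξ, 0] : EuclideanSpace ℝ (Fin 2)) +
      ((1 + t) / 2) ^ 2 • (WithLp.toLp 2 ![c, s] : EuclideanSpace ℝ (Fin 2))‖ ^ 2 =
      (((1 + t ^ 2) * c + (1 - t ^ 2) * ξ) / 2) ^ 2 + (t * s) ^ 2 := by
  rw [EuclideanSpace.norm_sq_eq, Fin.sum_univ_two]
  simp only [PiLp.add_apply, PiLp.smul_apply, smul_eq_mul, Real.norm_eq_abs, sq_abs,
    Matrix.cons_val_zero, Matrix.cons_val_one]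
  ring

lemma symmetric_quadratic_bezier_norm_sq_eq_one_of_sq_eq {c s r S t : ℝ}
    (hcs : c ^ 2 + s ^ 2 = 1) (hr : r ^ 2 = 2) (hS : S ^ 2 = 2 + 2 * r + c ^ 2)
    (ht : t ^ 2 = 3 - 2 * r) :
    (((1 + t ^ 2) * c + (1 - t ^ 2) * (-r * c + S)) / 2) ^ 2 + (t * s) ^ 2 = 1 := by
  have hx : ((1 + t ^ 2) * c + (1 - t ^ 2) * (-r * c + S)) / 2 = (r - 1) * S := by
    rw [ht]; linear_combination (-c) * hr
  rw [hx, mul_pow, mul_pow, hS, ht]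
  linear_combination (3 - 2 * r) * hcs + (2 * r + c ^ 2 - 2) * hr

theorem quadratic_G0_radial_error_zeros_general (φ : ℝ)
    (ξ : ℝ) (hξ : ξ = -Real.sqrt 2 * Real.cos φ + Real.sqrt (2 + 2 * Real.sqrt 2 + Real.cos φ ^ 2))
    (p₂ : ℝ → EuclideanSpace ℝ (Fin 2))
    (hp₂ : ∀ t : ℝ, p₂ t =
      ((1 - t) / 2) ^ 2 • (WithLp.toLp 2 ![Real.cos φ, -Real.sin φ] : EuclideanSpace ℝ (Fin 2)) +
      (2 * ((1 + t) / 2) * ((1 - t) / 2)) • (WithLp.toLp 2 ![ξ, 0] : EuclideanSpace ℝ (Fin 2)) +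
      ((1 + t) / 2) ^ 2 • (WithLp.toLp 2 ![Real.cos φ, Real.sin φ] : EuclideanSpace ℝ (Fin 2)))
    (ψ₂ : ℝ → ℝ) (hψ₂ : ∀ t : ℝ, ψ₂ t = ‖p₂ t‖ ^ 2 - 1) :
    ψ₂ (-1) = 0 ∧ ψ₂ (-Real.sqrt (3 - 2 * Real.sqrt 2)) = 0 ∧
      ψ₂ (Real.sqrt (3 - 2 * Real.sqrt 2)) = 0 ∧ ψ₂ 1 = 0 := by
  have hψ (t : ℝ) : ψ₂ t =
      (((1 + t ^ 2) * cos φ + (1 - t ^ 2) * ξ) / 2) ^ 2 + (t * sin φ) ^ 2 - 1 := by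
    rw [hψ₂, hp₂, norm_sq_symmetric_quadratic_bezier]
  have hcs : cos φ ^ 2 + sin φ ^ 2 = 1 := cos_sq_add_sin_sq φ
  have hendpoint {t : ℝ} (ht1 : t ^ 2 = 1) : ψ₂ t = 0 := by
    rw [hψ, mul_pow, ht1]
    linear_combination hcs
  have hr : √2 ^ 2 = 2 := sq_sqrt zero_le_two
  have hS : √(2 + 2 * √2 + cos φ ^ 2) ^ 2 = 2 + 2 * √2 + cos φ ^ 2 := sq_sqrt (by positivity)
  have ht : √(3 - 2 * √2) ^ 2 = 3 - 2 * √2 := by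
    refine sq_sqrt ?_
    nlinarith [sqrt_nonneg 2]
  have hinterior {t : ℝ} (ht2 : t ^ 2 = 3 - 2 * √2) : ψ₂ t = 0 := by
    rw [hψ, hξ, symmetric_quadratic_bezier_norm_sq_eq_one_of_sq_eq hcs hr hS ht2, sub_self]
  exact ⟨hendpoint (by norm_num), hinterior (by rw [neg_sq, ht]), hinterior ht,
    hendpoint (by norm_num)⟩

/-- For `φ ∈ (0, π/2]` and `ξ* = -√2 cos φ + √(2 + 2√2 + cos²φ)`, the quadratic Bézier
curve with control points `(cos φ, -sin φ)`, `(ξ*, 0)`, `(cos φ, sin φ)` has simplified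
radial error `ψ₂(t) = ‖p₂(t)‖² - 1` vanishing at `t = ±1` and `t = ±√(3-2√2)`. -/
theorem quadratic_G0_radial_error_zeros (φ : ℝ) (hφ : φ ∈ Set.Ioc 0 (π / 2))
    (ξ : ℝ) (hξ : ξ = -Real.sqrt 2 * Real.cos φ + Real.sqrt (2 + 2 * Real.sqrt 2 + Real.cos φ ^ 2))
    (p₂ : ℝ → EuclideanSpace ℝ (Fin 2))
    (hp₂ : ∀ t : ℝ, p₂ t =
      ((1 - t) / 2) ^ 2 • (WithLp.toLp 2 ![Real.cos φ, -Real.sin φ] : EuclideanSpace ℝ (Fin 2)) +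
      (2 * ((1 + t) / 2) * ((1 - t) / 2)) • (WithLp.toLp 2 ![ξ, 0] : EuclideanSpace ℝ (Fin 2)) +
      ((1 + t) / 2) ^ 2 • (WithLp.toLp 2 ![Real.cos φ, Real.sin φ] : EuclideanSpace ℝ (Fin 2)))
    (ψ₂ : ℝ → ℝ) (hψ₂ : ∀ t : ℝ, ψ₂ t = ‖p₂ t‖ ^ 2 - 1) :
    ψ₂ (-1) = 0 ∧ ψ₂ (-Real.sqrt (3 - 2 * Real.sqrt 2)) = 0 ∧
      ψ₂ (Real.sqrt (3 - 2 * Real.sqrt 2)) = 0 ∧ ψ₂ 1 = 0 :=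
  quadratic_G0_radial_error_zeros_general φ ξ hξ p₂ hp₂ ψ₂ hψ₂
end

section
/- For φ ∈ (0, π/2], let ξ*(φ) = -√2·cos φ + √(2 + 2√2 + cos²φ), let p₂(·; φ) be the quadratic Bézier curve with control points b₀ = (cos φ, -sin φ), b₁ = (ξ*(φ), 0), b₂ = (cos φ, sin φ) (Bernstein basis on [-1,1]), and let E(φ) = max_{t ∈ [-1,1]} | ‖p₂(t; φ)‖² - 1 |. Then E(φ) = ((3 - 2√2)/4) φ⁴ + O(φ⁵) as φ → 0⁺, i.e. the function φ ↦ E(φ) - ((3-2√2)/4) φ⁴ is O(φ⁵) as φ → 0 from the right. -/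
/-!
With `c = cos φ`, `s = sin φ` and middle control point `(x, 0)`, the curve is
`p(t) = (A + B t², s t)` with `A = (c + x)/2`, `B = (c - x)/2`, so the radial error is the
quadratic `B² u² + (2AB + s²) u + (A² - 1)` in `u = t² ∈ [0, 1]`, which vanishes at `u = 1`.
The choice `x = ξ*(φ)` is exactly the relation `B² = (1 + √2)² (A² - 1)`, under which the minimum
of this quadratic is `-(A² - 1)` (equioscillation), so `E(φ) = A² - 1`. Rationalising,
`A² - 1 = sin⁴ φ · errorCoeff (cos φ)`, where `errorCoeff` is smooth near `1` with value
`(3 - 2√2)/4` there; as `cos φ - 1 = O(φ²)` and `sin⁴ φ - φ⁴ = O(φ⁶)`, the error is even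
`(3 - 2√2)/4 · φ⁴ + O(φ⁶)`.
-/

open Real Filter Topology Asymptotics

lemma abs_quadratic_le_const {a b d u : ℝ} (ha : 0 ≤ a) (hd : 0 ≤ d) (hab : a + b ≤ 0)
    (hdisc : b ^ 2 ≤ 8 * a * d) (hu₀ : 0 ≤ u) (hu₁ : u ≤ 1) :
    |a * u ^ 2 + b * u + d| ≤ d := by
  rw [abs_le]
  constructor
  · rcases ha.eq_or_lt with rfl | ha
    · nlinarith
    · -- `4a (a u² + b u + 2d) = (2au + b)² + (8ad - b²)`
      have h : 0 ≤ 4 * a * (a * u ^ 2 + b * u + d + d) := by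
        nlinarith [sq_nonneg (2 * a * u + b)]
      linarith [(mul_nonneg_iff_of_pos_left (by positivity : (0 : ℝ) < 4 * a)).1 h]
  · nlinarith [mul_nonneg hu₀ (sub_nonneg.2 hu₁)]

lemma isGreatest_abs_quadratic_sq {a b d : ℝ} (ha : 0 ≤ a) (hd : 0 ≤ d) (hab : a + b ≤ 0)
    (hdisc : b ^ 2 ≤ 8 * a * d) :
    IsGreatest ((fun t => |a * (t ^ 2) ^ 2 + b * t ^ 2 + d|) '' Set.Icc (-1) 1) d := by
  refine ⟨⟨0, by norm_num, by simp [abs_of_nonneg hd]⟩, ?_⟩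
  rintro _ ⟨t, ⟨ht₀, ht₁⟩, rfl⟩
  exact abs_quadratic_le_const ha hd hab hdisc (sq_nonneg t) (by nlinarith)

lemma norm_sq_symmetric_quadBezier (c s x t : ℝ) :
    ‖((1 - t) / 2) ^ 2 • (WithLp.toLp 2 ![c, -s] : EuclideanSpace ℝ (Fin 2)) +
      (2 * ((1 + t) / 2) * ((1 - t) / 2)) • (WithLp.toLp 2 ![x, 0] : EuclideanSpace ℝ (Fin 2)) +
      ((1 + t) / 2) ^ 2 • (WithLp.toLp 2 ![c, s] : EuclideanSpace ℝ (Fin 2))‖ ^ 2 =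
    ((c + x) / 2 + (c - x) / 2 * t ^ 2) ^ 2 + (s * t) ^ 2 := by
  simp only [EuclideanSpace.real_norm_sq_eq, PiLp.add_apply, PiLp.smul_apply, smul_eq_mul,
    Fin.sum_univ_two, Matrix.cons_val_zero, Matrix.cons_val_one, Matrix.cons_val_fin_one]
  ring

lemma isGreatest_abs_radialError {c s x : ℝ} (hcs : c ^ 2 + s ^ 2 = 1)
    (hx : ((c - x) / 2) ^ 2 = (1 + √2) ^ 2 * (((c + x) / 2) ^ 2 - 1)) :
    IsGreatest ((fun t => |((c + x) / 2 + (c - x) / 2 * t ^ 2) ^ 2 + (s * t) ^ 2 - 1|) ''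
      Set.Icc (-1) 1) (((c + x) / 2) ^ 2 - 1) := by
  set A := (c + x) / 2
  set B := (c - x) / 2
  have hr : √2 ^ 2 = 2 := sq_sqrt (by norm_num)
  have hd : 0 ≤ A ^ 2 - 1 :=
    (mul_nonneg_iff_of_pos_left (by positivity : (0 : ℝ) < (1 + √2) ^ 2)).1 (hx ▸ sq_nonneg B)
  have hvanish : B ^ 2 + (2 * A * B + s ^ 2) + (A ^ 2 - 1) = 0 := by
    linear_combination hcs
  -- for `a = B²`, `b = 2AB + s²`, `d = A² - 1`: `b = -(a + d)`, `a = k d` with `k = (1 + √2)²`,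
  -- and `(k + 1)² = 8k`
  have hdisc : (2 * A * B + s ^ 2) ^ 2 = 8 * B ^ 2 * (A ^ 2 - 1) := by
    linear_combination (2 * A * B + s ^ 2 - B ^ 2 - (A ^ 2 - 1)) * hvanish +
      (B ^ 2 + (1 + √2) ^ 2 * (A ^ 2 - 1) - 6 * (A ^ 2 - 1)) * hx +
      (A ^ 2 - 1) ^ 2 * (√2 ^ 2 + 2 + 4 * √2) * hr
  have hψ : (fun t : ℝ => |(A + B * t ^ 2) ^ 2 + (s * t) ^ 2 - 1|) =
      fun t => |B ^ 2 * (t ^ 2) ^ 2 + (2 * A * B + s ^ 2) * t ^ 2 + (A ^ 2 - 1)| := by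
    funext t
    congr 1
    ring
  rw [hψ]
  exact isGreatest_abs_quadratic_sq (sq_nonneg B) hd (by linarith) hdisc.le

noncomputable def xiStar (c : ℝ) : ℝ := -√2 * c + √(2 + 2 * √2 + c ^ 2)

noncomputable def errorCoeff (c : ℝ) : ℝ :=
  (√2 - 1) / (2 * (√2 * c ^ 2 + 1 + c * √(2 + 2 * √2 + c ^ 2)))

lemma xiStar_sub_sq (c : ℝ) :
    ((c - xiStar c) / 2) ^ 2 = (1 + √2) ^ 2 * (((c + xiStar c) / 2) ^ 2 - 1) := by
  have hq : √(2 + 2 * √2 + c ^ 2) ^ 2 = 2 + 2 * √2 + c ^ 2 := sq_sqrt (by positivity)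
  have hr : √2 ^ 2 = 2 := sq_sqrt (by norm_num)
  unfold xiStar
  generalize √(2 + 2 * √2 + c ^ 2) = q at *
  generalize √2 = r at *
  linear_combination (-2 * r - r ^ 2) / 4 * hq +
    (2 * (1 + r) * c * q - r ^ 2 * c ^ 2 - 2 - 2 * r) / 4 * hr

lemma sq_add_xiStar_sub_one {c : ℝ} (hc : 0 ≤ c) :
    ((c + xiStar c) / 2) ^ 2 - 1 = (1 - c ^ 2) ^ 2 * errorCoeff c := by
  have hq : √(2 + 2 * √2 + c ^ 2) ^ 2 = 2 + 2 * √2 + c ^ 2 := sq_sqrt (by positivity)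
  have hr : √2 ^ 2 = 2 := sq_sqrt (by norm_num)
  have hD : 0 < 2 * (√2 * c ^ 2 + 1 + c * √(2 + 2 * √2 + c ^ 2)) := by positivity
  rw [errorCoeff, mul_div_assoc', eq_div_iff hD.ne', xiStar]
  generalize √(2 + 2 * √2 + c ^ 2) = q at *
  generalize √2 = r at *
  linear_combination (1 + c * q + 2 * c ^ 2 - c ^ 2 * r) / 2 * hq +
    (-c ^ 2 - c ^ 3 * q - 2 * c ^ 4 + c ^ 4 * r) / 2 * hr

lemma errorCoeff_one : errorCoeff 1 = (3 - 2 * √2) / 4 := by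
  have hr : √2 ^ 2 = 2 := sq_sqrt (by norm_num)
  have hq : √(2 + 2 * √2 + 1 ^ 2) = 1 + √2 := by
    rw [sqrt_eq_iff_eq_sq (by positivity) (by positivity)]
    linear_combination -hr
  rw [errorCoeff, hq, div_eq_div_iff (by positivity) (by norm_num)]
  linear_combination 8 * hr

lemma differentiableAt_errorCoeff {c : ℝ} (hc : 0 ≤ c) : DifferentiableAt ℝ errorCoeff c := by
  unfold errorCoeff
  fun_prop (disch := positivity)

lemma isBigO_cos_sub_one (l : Filter ℝ) : (fun φ => cos φ - 1) =O[l] fun φ => φ ^ 2 :=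
  IsBigO.of_bound (1 / 2) <| .of_forall fun φ => by
    rw [norm_eq_abs, norm_eq_abs, abs_of_nonpos (by linarith [cos_le_one φ]),
      abs_of_nonneg (sq_nonneg φ)]
    linarith [one_sub_sq_div_two_le_cos (x := φ)]

lemma isBigO_sin_pow_four_sub_pow_four (l : Filter ℝ) :
    (fun φ => sin φ ^ 4 - φ ^ 4) =O[l] fun φ => φ ^ 6 := by
  have hsin : sin =O[l] id := isBigO_of_le l fun φ => by simpa using abs_sin_le_abs
  have hsub : (fun φ => sin φ - φ) =O[l] fun φ => φ ^ 3 :=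
    IsBigO.of_bound (1 / 6) <| .of_forall fun φ => by
      simpa [abs_sub_comm, div_eq_inv_mul] using abs_sub_sin_le φ
  have hrest : (fun φ => (sin φ + φ) * (sin φ ^ 2 + φ ^ 2)) =O[l] fun φ => φ * φ ^ 2 :=
    (hsin.add (isBigO_refl _ _)).mul ((hsin.pow 2).add (isBigO_refl _ _))
  exact (hsub.mul hrest).congr (fun φ => by ring) (fun φ => by ring)

lemma isBigO_sin_pow_four_mul_comp_cos_sub {g : ℝ → ℝ} (hg : DifferentiableAt ℝ g 1) :
    (fun φ => sin φ ^ 4 * g (cos φ) - g 1 * φ ^ 4) =O[𝓝 0] fun φ => φ ^ 6 := by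
  have hcos : Tendsto cos (𝓝 0) (𝓝 1) := by simpa using continuous_cos.tendsto 0
  have hg_cos : (fun φ => g (cos φ) - g 1) =O[𝓝 0] fun φ => φ ^ 2 :=
    (hg.isBigO_sub.comp_tendsto hcos).trans (isBigO_cos_sub_one _)
  have hsin4 : (fun φ => sin φ ^ 4) =O[𝓝 0] fun φ => φ ^ 4 :=
    (isBigO_of_le _ fun φ => by simpa using abs_sin_le_abs).pow 4
  have hsin4_sub : (fun φ => g 1 * (sin φ ^ 4 - φ ^ 4)) =O[𝓝 0] fun φ => φ ^ 4 * φ ^ 2 :=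
    ((isBigO_sin_pow_four_sub_pow_four _).const_mul_left _).congr_right fun φ => by ring
  exact ((hsin4.mul hg_cos).add hsin4_sub).congr (fun φ => by ring) (fun φ => by ring)

/-- For `φ ∈ (0, π/2]`, let `p₂(·; φ)` be the quadratic Bézier curve with control points
`(cos φ, -sin φ)`, `(ξ*(φ), 0)`, `(cos φ, sin φ)` where
`ξ*(φ) = -√2 cos φ + √(2 + 2√2 + cos²φ)`, and let
`E(φ) = max_{t ∈ [-1,1]} |‖p₂(t;φ)‖² - 1|`. Then
`E(φ) = ((3-2√2)/4) φ⁴ + O(φ⁵)` as `φ → 0⁺`. -/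
theorem quadratic_G0_error_asymptotics
    (ξ : ℝ → ℝ)
    (hξ : ∀ φ : ℝ, ξ φ =
      -Real.sqrt 2 * Real.cos φ + Real.sqrt (2 + 2 * Real.sqrt 2 + Real.cos φ ^ 2))
    (p₂ : ℝ → ℝ → EuclideanSpace ℝ (Fin 2))
    (hp₂ : ∀ t φ : ℝ, p₂ t φ =
      ((1 - t) / 2) ^ 2 • (WithLp.toLp 2 ![Real.cos φ, -Real.sin φ] : EuclideanSpace ℝ (Fin 2)) +
      (2 * ((1 + t) / 2) * ((1 - t) / 2)) • (WithLp.toLp 2 ![ξ φ, 0] : EuclideanSpace ℝ (Fin 2)) +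
      ((1 + t) / 2) ^ 2 • (WithLp.toLp 2 ![Real.cos φ, Real.sin φ] : EuclideanSpace ℝ (Fin 2)))
    (E : ℝ → ℝ)
    (hE : ∀ φ : ℝ, IsGreatest ((fun t => |‖p₂ t φ‖ ^ 2 - 1|) '' Set.Icc (-1:ℝ) 1) (E φ)) :
    (fun φ : ℝ => E φ - ((3 - 2 * Real.sqrt 2) / 4) * φ ^ 4)
      =O[nhdsWithin 0 (Set.Ioi 0)] (fun φ : ℝ => φ ^ 5) := by
  obtain rfl : ξ = fun φ => xiStar (cos φ) := funext hξ
  have hE_eq (φ : ℝ) : E φ = ((cos φ + xiStar (cos φ)) / 2) ^ 2 - 1 := by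
    refine (hE φ).unique ?_
    simp only [hp₂, norm_sq_symmetric_quadBezier]
    exact isGreatest_abs_radialError (cos_sq_add_sin_sq φ) (xiStar_sub_sq _)
  have hE_near_zero : ∀ᶠ φ in 𝓝 0, E φ = sin φ ^ 4 * errorCoeff (cos φ) := by
    filter_upwards [(continuous_cos.tendsto 0).eventually_const_lt (show (0 : ℝ) < cos 0 by simp)] with φ hφ
    rw [hE_eq, sq_add_xiStar_sub_one hφ.le, ← sin_sq]
    ring
  have hE_sub : (fun φ => E φ - (3 - 2 * √2) / 4 * φ ^ 4) =O[𝓝 0] fun φ => φ ^ 6 := by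
    refine (isBigO_sin_pow_four_mul_comp_cos_sub (differentiableAt_errorCoeff zero_le_one)).congr'
      ?_ .rfl
    filter_upwards [hE_near_zero] with φ hφ
    rw [hφ, errorCoeff_one]
  exact (hE_sub.trans (isLittleO_pow_pow (by norm_num)).isBigO).mono nhdsWithin_le_nhds
end

section
/- Fix φ ∈ (0, π/2] and real numbers ξ, η. Let p₃ : [-1,1] → ℝ² be the cubic Bézier curve p₃(t) = Σ_{j=0}^{3} B_j³(t) b_j with control points b₀ = (cos φ, -sin φ), b₁ = (ξ, -η), b₂ = (ξ, η), b₃ = (cos φ, sin φ), and set ψ₃(t) = ‖p₃(t)‖² - 1. Then ψ₃(2-√3) = 0 if and only if e₁(ξ, η; φ) = 0, and ψ₃(√3-1) = 0 if and only if e₂(ξ, η; φ) = 0, where e_i(ξ, η; φ) = (ξ - p_i(φ))²/a_i² + (η - q_i(φ))²/b_i² - 1 with centers (p₁(φ), q₁(φ)) = ((1/9)(3 - 4√3) cos φ, (1/9)(-3 - 4√3) sin φ), (p₂(φ), q₂(φ)) = ((1/9)(-3 - 8√3) cos φ, (1/9)(-9 - 8√3) sin φ) and semiaxes (a₁, b₁)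 = ((2/9)(3 + 2√3), (2/9)(12 + 7√3)), (a₂, b₂) = ((4/9)(3 + 2√3), (2/9)(9 + 5√3)). -/
open Real

/-!
By the symmetry of the control polygon,
`p₃(t) = ((1 + 3t²)/4 · cos φ + 3(1 - t²)/4 · ξ, t(3 + t²)/4 · sin φ + 3t(1 - t²)/4 · η)`,
so for fixed `t ∉ {0, ±1}` both coordinates are affine in `(ξ, η)` with nonzero slopes, and
`ψ₃(t) = ‖p₃(t)‖² - 1` is *literally* the defining polynomial `e(ξ, η)` of an axis-parallel
ellipse whose centre and semiaxes are rational functions of `t`. Evaluating them at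
`t = 2 - √3` and `t = √3 - 1` gives `e₁` and `e₂`.
-/

noncomputable def symmCubicBezier (c s ξ η t : ℝ) : EuclideanSpace ℝ (Fin 2) :=
  ((1 - t) / 2) ^ 3 • !₂[c, -s] + (3 * ((1 + t) / 2) * ((1 - t) / 2) ^ 2) • !₂[ξ, -η] +
    (3 * ((1 + t) / 2) ^ 2 * ((1 - t) / 2)) • !₂[ξ, η] + ((1 + t) / 2) ^ 3 • !₂[c, s]

theorem symmCubicBezier_eq (c s ξ η t : ℝ) :
    symmCubicBezier c s ξ η t =
      !₂[(1 + 3 * t ^ 2) / 4 * c + 3 * (1 - t ^ 2) / 4 * ξ,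
        t * (3 + t ^ 2) / 4 * s + 3 * t * (1 - t ^ 2) / 4 * η] := by
  ext i
  fin_cases i <;>
    simp only [symmCubicBezier, Fin.zero_eta, Fin.mk_one, Fin.isValue, PiLp.add_apply,
      PiLp.smul_apply, Matrix.cons_val_zero, Matrix.cons_val_one, Matrix.cons_val_fin_one,
      smul_eq_mul, mul_neg] <;>
    ring

theorem norm_sq_symmCubicBezier (c s ξ η t : ℝ) :
    ‖symmCubicBezier c s ξ η t‖ ^ 2 =
      ((1 + 3 * t ^ 2) / 4 * c + 3 * (1 - t ^ 2) / 4 * ξ) ^ 2 +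
        (t * (3 + t ^ 2) / 4 * s + 3 * t * (1 - t ^ 2) / 4 * η) ^ 2 := by
  rw [symmCubicBezier_eq, EuclideanSpace.norm_sq_eq, Fin.sum_univ_two]
  simp [sq_abs]

theorem norm_sq_symmCubicBezier_sub_one_eq_ellipse {c s ξ η t p q a b : ℝ}
    (ha : 3 * (1 - t ^ 2) * a = 4) (hb : 3 * t * (1 - t ^ 2) * b = 4)
    (hp : 3 * (1 - t ^ 2) * p = -(1 + 3 * t ^ 2)) (hq : 3 * (1 - t ^ 2) * q = -(3 + t ^ 2)) :
    ‖symmCubicBezier c s ξ η t‖ ^ 2 - 1 =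
      (ξ - p * c) ^ 2 / a ^ 2 + (η - q * s) ^ 2 / b ^ 2 - 1 := by
  have ha₀ : a ≠ 0 := by rintro rfl; simp at ha
  have hb₀ : b ≠ 0 := by rintro rfl; simp at hb
  have hx : (1 + 3 * t ^ 2) / 4 * c + 3 * (1 - t ^ 2) / 4 * ξ = (ξ - p * c) / a := by
    rw [eq_div_iff ha₀]
    linear_combination (ξ - p * c) / 4 * ha + a * c / 4 * hp
  have hy : t * (3 + t ^ 2) / 4 * s + 3 * t * (1 - t ^ 2) / 4 * η = (η - q * s) / b := by
    rw [eq_div_iff hb₀]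
    linear_combination (η - q * s) / 4 * hb + t * b * s / 4 * hq
  rw [norm_sq_symmCubicBezier, hx, hy, div_pow, div_pow]

theorem cubic_G0_system_is_two_ellipses_general (φ : ℝ) (ξ η : ℝ)
    (p₃ : ℝ → EuclideanSpace ℝ (Fin 2))
    (hp₃ : ∀ t : ℝ, p₃ t =
      ((1 - t) / 2) ^ 3 • (!₂[Real.cos φ, -Real.sin φ] : EuclideanSpace ℝ (Fin 2)) +
      (3 * ((1 + t) / 2) * ((1 - t) / 2) ^ 2) • (!₂[ξ, -η] : EuclideanSpace ℝ (Fin 2)) +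
      (3 * ((1 + t) / 2) ^ 2 * ((1 - t) / 2)) • (!₂[ξ, η] : EuclideanSpace ℝ (Fin 2)) +
      ((1 + t) / 2) ^ 3 • (!₂[Real.cos φ, Real.sin φ] : EuclideanSpace ℝ (Fin 2)))
    (ψ₃ : ℝ → ℝ) (hψ₃ : ∀ t : ℝ, ψ₃ t = ‖p₃ t‖ ^ 2 - 1) :
    (ψ₃ (2 - Real.sqrt 3) = 0 ↔
      (ξ - (1/9) * (3 - 4 * Real.sqrt 3) * Real.cos φ) ^ 2 /
          ((2/9) * (3 + 2 * Real.sqrt 3)) ^ 2 +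
        (η - (1/9) * (-3 - 4 * Real.sqrt 3) * Real.sin φ) ^ 2 /
          ((2/9) * (12 + 7 * Real.sqrt 3)) ^ 2 - 1 = 0) ∧
    (ψ₃ (Real.sqrt 3 - 1) = 0 ↔
      (ξ - (1/9) * (-3 - 8 * Real.sqrt 3) * Real.cos φ) ^ 2 /
          ((4/9) * (3 + 2 * Real.sqrt 3)) ^ 2 +
        (η - (1/9) * (-9 - 8 * Real.sqrt 3) * Real.sin φ) ^ 2 /
          ((2/9) * (9 + 5 * Real.sqrt 3)) ^ 2 - 1 = 0) := by
  have hψ₃ : ∀ t, ψ₃ t = ‖symmCubicBezier (cos φ) (sin φ) ξ η t‖ ^ 2 - 1 := fun t ↦ by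
    rw [hψ₃, hp₃]; rfl
  have hr : √3 ^ 2 = 3 := sq_sqrt (by norm_num)
  constructor
  · rw [hψ₃, norm_sq_symmCubicBezier_sub_one_eq_ellipse]
    · linear_combination (10/3 - 4/3 * √3) * hr
    · linear_combination (52/3 - 20 * √3 + 14/3 * √3 ^ 2) * hr
    · linear_combination (-10/3 + 4/3 * √3) * hr
    · linear_combination (-10/3 + 4/3 * √3) * hr
  · rw [hψ₃, norm_sq_symmCubicBezier_sub_one_eq_ellipse]
    · linear_combination (4/3 - 8/3 * √3) * hr
    · linear_combination (4/3 + 4 * √3 - 10/3 * √3 ^ 2) * hr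
    · linear_combination (-4/3 + 8/3 * √3) * hr
    · linear_combination (-4/3 + 8/3 * √3) * hr

/-- For `φ ∈ (0, π/2]` and reals `ξ, η`, the cubic Bézier curve with control points
`(cos φ, -sin φ)`, `(ξ, -η)`, `(ξ, η)`, `(cos φ, sin φ)` has simplified radial error
`ψ₃(t) = ‖p₃(t)‖² - 1` satisfying: `ψ₃(2-√3) = 0` iff `e₁(ξ,η;φ) = 0`, and
`ψ₃(√3-1) = 0` iff `e₂(ξ,η;φ) = 0`, where `e₁`, `e₂` are the stated ellipses. -/
theorem cubic_G0_system_is_two_ellipses (φ : ℝ) (hφ : φ ∈ Set.Ioc 0 (π / 2)) (ξ η : ℝ)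
    (p₃ : ℝ → EuclideanSpace ℝ (Fin 2))
    (hp₃ : ∀ t : ℝ, p₃ t =
      ((1 - t) / 2) ^ 3 • (!₂[Real.cos φ, -Real.sin φ] : EuclideanSpace ℝ (Fin 2)) +
      (3 * ((1 + t) / 2) * ((1 - t) / 2) ^ 2) • (!₂[ξ, -η] : EuclideanSpace ℝ (Fin 2)) +
      (3 * ((1 + t) / 2) ^ 2 * ((1 - t) / 2)) • (!₂[ξ, η] : EuclideanSpace ℝ (Fin 2)) +
      ((1 + t) / 2) ^ 3 • (!₂[Real.cos φ, Real.sin φ] : EuclideanSpace ℝ (Fin 2)))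
    (ψ₃ : ℝ → ℝ) (hψ₃ : ∀ t : ℝ, ψ₃ t = ‖p₃ t‖ ^ 2 - 1) :
    (ψ₃ (2 - Real.sqrt 3) = 0 ↔
      (ξ - (1/9) * (3 - 4 * Real.sqrt 3) * Real.cos φ) ^ 2 /
          ((2/9) * (3 + 2 * Real.sqrt 3)) ^ 2 +
        (η - (1/9) * (-3 - 4 * Real.sqrt 3) * Real.sin φ) ^ 2 /
          ((2/9) * (12 + 7 * Real.sqrt 3)) ^ 2 - 1 = 0) ∧
    (ψ₃ (Real.sqrt 3 - 1) = 0 ↔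
      (ξ - (1/9) * (-3 - 8 * Real.sqrt 3) * Real.cos φ) ^ 2 /
          ((4/9) * (3 + 2 * Real.sqrt 3)) ^ 2 +
        (η - (1/9) * (-9 - 8 * Real.sqrt 3) * Real.sin φ) ^ 2 /
          ((2/9) * (9 + 5 * Real.sqrt 3)) ^ 2 - 1 = 0) :=
  cubic_G0_system_is_two_ellipses_general φ ξ η p₃ hp₃ ψ₃ hψ₃
end

section
/- For φ ∈ (0, π/2], define ξ₁ = (1/9)(3 - 4√3) cos φ + √((1/54)(19 + 52√3) + (1/54)(37 - 20√3) cos 2φ), ξ₂ = -(1/9)(3 + 8√3) cos φ + √((1/27)(74 + 59√3) + (1/27)(38 + 5√3) cos 2φ), η₁ = -(1/9)(3 + 4√3) sin φ + √((2/27)(199 + 116√3) + (2/27)(37 + 20√3) cos φ) · sin(φ/2), and η₂ = -(1/9)(9 + 8√3) sin φ + √((1/27)(362 + 213√3) + (1/27)(182 + 99√3) cos φ) · sin(φ/2). Then (ξ₁ - ξ₂)(η₁ - η₂) < 0. -/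
set_option maxHeartbeats 4000000


open Real

/-- For `φ ∈ (0, π/2]`, the boundary intersections `ξ₁, ξ₂, η₁, η₂` of the two ellipses
with the boundary of the region `{ξ > 1, η > 0}` satisfy `(ξ₁ - ξ₂)(η₁ - η₂) < 0`. -/
theorem ellipse_boundary_crossings (φ : ℝ) (hφ : φ ∈ Set.Ioc 0 (π / 2))
    (ξ₁ ξ₂ η₁ η₂ : ℝ)
    (hξ₁ : ξ₁ = (1/9) * (3 - 4 * Real.sqrt 3) * Real.cos φ +
      Real.sqrt ((1/54) * (19 + 52 * Real.sqrt 3) +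
        (1/54) * (37 - 20 * Real.sqrt 3) * Real.cos (2 * φ)))
    (hξ₂ : ξ₂ = -(1/9) * (3 + 8 * Real.sqrt 3) * Real.cos φ +
      Real.sqrt ((1/27) * (74 + 59 * Real.sqrt 3) +
        (1/27) * (38 + 5 * Real.sqrt 3) * Real.cos (2 * φ)))
    (hη₁ : η₁ = -(1/9) * (3 + 4 * Real.sqrt 3) * Real.sin φ +
      Real.sqrt ((2/27) * (199 + 116 * Real.sqrt 3) +
        (2/27) * (37 + 20 * Real.sqrt 3) * Real.cos φ) * Real.sin (φ / 2))
    (hη₂ : η₂ = -(1/9) * (9 + 8 * Real.sqrt 3) * Real.sin φ +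
      Real.sqrt ((1/27) * (362 + 213 * Real.sqrt 3) +
        (1/27) * (182 + 99 * Real.sqrt 3) * Real.cos φ) * Real.sin (φ / 2)) :
    (ξ₁ - ξ₂) * (η₁ - η₂) < 0 := by
  obtain ⟨hφ0, hφ2⟩ := hφ
  have hπ := Real.pi_pos
  have hs2 : Real.sqrt 3 ^ 2 = 3 := Real.sq_sqrt (by norm_num)
  have hs0 : (0:ℝ) ≤ Real.sqrt 3 := Real.sqrt_nonneg 3
  set s := Real.sqrt 3 with hsdef
  have hslb : (1.7:ℝ) < s := by nlinarith
  have hsub : s < 1.8 := by nlinarith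
  have hc0 : 0 ≤ Real.cos φ := Real.cos_nonneg_of_mem_Icc ⟨by linarith, hφ2⟩
  have hc1 : Real.cos φ < 1 := by
    have h := Real.cos_lt_cos_of_nonneg_of_le_pi le_rfl (by linarith) hφ0
    simpa using h
  have hcos2 : Real.cos (2 * φ) = 2 * Real.cos φ ^ 2 - 1 := Real.cos_two_mul φ
  have hm : 0 < Real.sin (φ / 2) :=
    Real.sin_pos_of_pos_of_lt_pi (by linarith) (by linarith)
  have hw : 0 < Real.cos (φ / 2) :=
    Real.cos_pos_of_mem_Ioo ⟨by linarith, by linarith⟩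
  have hsinφ : Real.sin φ = 2 * Real.sin (φ / 2) * Real.cos (φ / 2) := by
    rw [← Real.sin_two_mul]; ring_nf
  have hwsq : Real.cos (φ / 2) ^ 2 = (1 + Real.cos φ) / 2 := by
    have h := Real.cos_two_mul (φ / 2)
    rw [show 2 * (φ / 2) = φ by ring] at h
    linarith
  set c := Real.cos φ with hcdef
  set m := Real.sin (φ / 2) with hmdef
  set w := Real.cos (φ / 2) with hwdef
  -- ξ part
  have hx : ξ₁ - ξ₂ < 0 := by
    rw [hξ₁, hξ₂, hcos2]
    set A := (1/54) * (19 + 52 * s) + (1/54) * (37 - 20 * s) * (2 * c ^ 2 - 1) with hAdef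
    set B := (1/27) * (74 + 59 * s) + (1/27) * (38 + 5 * s) * (2 * c ^ 2 - 1) with hBdef
    have hA : (0:ℝ) ≤ A := by
      rw [hAdef]; nlinarith [sq_nonneg c, sq_nonneg (1 - c)]
    have hB : (0:ℝ) ≤ B := by
      rw [hBdef]; nlinarith [sq_nonneg c, sq_nonneg (1 - c)]
    have ha2 : Real.sqrt A ^ 2 = A := Real.sq_sqrt hA
    have hb2 : Real.sqrt B ^ 2 = B := Real.sq_sqrt hB
    have ha0 : 0 ≤ Real.sqrt A := Real.sqrt_nonneg A
    have hb0 : 0 ≤ Real.sqrt B := Real.sqrt_nonneg B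
    have hE : 0 < B - A - ((6 + 4 * s) / 9) ^ 2 * c ^ 2 := by
      rw [hAdef, hBdef]
      nlinarith [sq_nonneg c, mul_nonneg hs0 (sq_nonneg c)]
    have hcr0 : 0 ≤ 2 * ((6 + 4 * s) / 9) * c * Real.sqrt A := by
      have h1 : (0:ℝ) ≤ 2 * ((6 + 4 * s) / 9) * c := by
        have := mul_nonneg (show (0:ℝ) ≤ 2 * ((6 + 4 * s) / 9) by linarith) hc0
        linarith
      exact mul_nonneg h1 ha0
    have hfac1 : 0 < 1 - c ^ 2 := by nlinarith
    have hfac2 : 0 < 37/9 + 20/9 * s - (5/9 + 20/81 * s) * c ^ 2 := by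
      nlinarith [sq_nonneg c]
    have hid : (B - A - ((6 + 4 * s) / 9) ^ 2 * c ^ 2) ^ 2
        - (2 * ((6 + 4 * s) / 9) * c * Real.sqrt A) ^ 2
        = (1 - c ^ 2) * (37/9 + 20/9 * s - (5/9 + 20/81 * s) * c ^ 2) := by
      rw [hAdef, hBdef]
      linear_combination (4/9 - (232/81 + 320/243 * s) * c ^ 2
          + (484/729 + 832/2187 * s + 256/6561 * s ^ 2) * c ^ 4) * hs2
        + (-4 * ((6 + 4 * s) / 9) ^ 2 * c ^ 2) * ha2
    have hsq : (2 * ((6 + 4 * s) / 9) * c * Real.sqrt A) ^ 2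
        < (B - A - ((6 + 4 * s) / 9) ^ 2 * c ^ 2) ^ 2 := by
      linarith [mul_pos hfac1 hfac2, hid]
    have hcross : 2 * ((6 + 4 * s) / 9) * c * Real.sqrt A
        < B - A - ((6 + 4 * s) / 9) ^ 2 * c ^ 2 :=
      lt_of_pow_lt_pow_left₀ 2 hE.le hsq
    have hkey2 : (Real.sqrt A + ((6 + 4 * s) / 9) * c) ^ 2 < Real.sqrt B ^ 2 := by
      have hexp : (Real.sqrt A + ((6 + 4 * s) / 9) * c) ^ 2
          = A + 2 * ((6 + 4 * s) / 9) * c * Real.sqrt A + ((6 + 4 * s) / 9) ^ 2 * c ^ 2 := by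
        linear_combination ha2
      rw [hb2, hexp]; linarith [hcross]
    have hkey : Real.sqrt A + ((6 + 4 * s) / 9) * c < Real.sqrt B :=
      lt_of_pow_lt_pow_left₀ 2 hb0 hkey2
    linarith [hkey]
  -- η part
  have hy : 0 < η₁ - η₂ := by
    rw [hη₁, hη₂, hsinφ]
    set A2 := (2/27) * (199 + 116 * s) + (2/27) * (37 + 20 * s) * c with hA2def
    set B2 := (1/27) * (362 + 213 * s) + (1/27) * (182 + 99 * s) * c with hB2def
    have hA2 : (0:ℝ) ≤ A2 := by
      rw [hA2def]; nlinarith [mul_nonneg hs0 hc0]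
    have hB2 : (0:ℝ) ≤ B2 := by
      rw [hB2def]; nlinarith [mul_nonneg hs0 hc0]
    have hu2 : Real.sqrt A2 ^ 2 = A2 := Real.sq_sqrt hA2
    have hv2 : Real.sqrt B2 ^ 2 = B2 := Real.sq_sqrt hB2
    have hu0 : 0 ≤ Real.sqrt A2 := Real.sqrt_nonneg A2
    have hv0 : 0 ≤ Real.sqrt B2 := Real.sqrt_nonneg B2
    have hrhs0 : 0 ≤ 2 * ((6 + 4 * s) / 9) * w + Real.sqrt A2 := by
      have h1 : (0:ℝ) ≤ 2 * ((6 + 4 * s) / 9) * w := by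
        have := mul_nonneg (show (0:ℝ) ≤ 2 * ((6 + 4 * s) / 9) by linarith) hw.le
        linarith
      linarith
    have hcr0 : 0 ≤ 4 * ((6 + 4 * s) / 9) * w * Real.sqrt A2 := by
      have h1 : (0:ℝ) ≤ 4 * ((6 + 4 * s) / 9) * w := by
        have := mul_nonneg (show (0:ℝ) ≤ 4 * ((6 + 4 * s) / 9) by linarith) hw.le
        linarith
      exact mul_nonneg h1 hu0
    have hid2 : (2 * ((6 + 4 * s) / 9) * w + Real.sqrt A2) ^ 2 - Real.sqrt B2 ^ 2
        = 92/27 + 17/9 * s - 52/27 * c - s * c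
          + 4 * ((6 + 4 * s) / 9) * w * Real.sqrt A2 := by
      rw [hA2def, hB2def]
      linear_combination (4 * ((6 + 4 * s) / 9) ^ 2) * hwsq + hu2 - hv2
        + (32/81 + 32/81 * c) * hs2
    have hpos2 : 0 < 92/27 + 17/9 * s - 52/27 * c - s * c := by
      nlinarith [mul_nonneg hs0 (show (0:ℝ) ≤ 17/9 - c by linarith)]
    have hsq2 : Real.sqrt B2 ^ 2 < (2 * ((6 + 4 * s) / 9) * w + Real.sqrt A2) ^ 2 := by
      linarith [hid2, hpos2, hcr0]
    have hkey2 : Real.sqrt B2 < 2 * ((6 + 4 * s) / 9) * w + Real.sqrt A2 :=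
      lt_of_pow_lt_pow_left₀ 2 hrhs0 hsq2
    have := mul_pos hm (show 0 < 2 * ((6 + 4 * s) / 9) * w + Real.sqrt A2 - Real.sqrt B2
      by linarith)
    linarith [this]
  exact mul_neg_of_neg_of_pos hx hy
end

section
/- For every φ ∈ (0, π/2], the two ellipses e₁(ξ, η; φ) = 0 and e₂(ξ, η; φ) = 0 intersect at precisely one point (ξ, η) in the region D = {(ξ, η) ∈ ℝ² : ξ > 1, η > 0}; that is, there exists a unique pair (ξ, η) with ξ > 1 and η > 0 satisfying e₁(ξ, η; φ) = 0 and e₂(ξ, η; φ) = 0. -/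
open Real

noncomputable def wfun (B Q y : ℝ) : ℝ := Real.sqrt (B ^ 2 - (y - Q) ^ 2)

lemma wfun_def (B Q y : ℝ) : wfun B Q y = Real.sqrt (B ^ 2 - (y - Q) ^ 2) := rfl

lemma wfun_nonneg (B Q y : ℝ) : 0 ≤ wfun B Q y := Real.sqrt_nonneg _

lemma wfun_sq {B Q y : ℝ} (h : 0 ≤ B ^ 2 - (y - Q) ^ 2) :
    (wfun B Q y) ^ 2 = B ^ 2 - (y - Q) ^ 2 := Real.sq_sqrt h

lemma wfun_gt {B Q y t : ℝ} (ht : 0 ≤ t) (h : t ^ 2 < B ^ 2 - (y - Q) ^ 2) :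
    t < wfun B Q y := (Real.lt_sqrt ht).mpr h

lemma wfun_anti {B Q y y' : ℝ} (h : (y - Q) ^ 2 ≤ (y' - Q) ^ 2) :
    wfun B Q y' ≤ wfun B Q y := by
  unfold wfun
  exact Real.sqrt_le_sqrt (by linarith)

lemma wfun_cont (B Q : ℝ) : Continuous (wfun B Q) := by
  unfold wfun
  exact Real.continuous_sqrt.comp (by continuity)

lemma sq_inj {u v : ℝ} (hu : 0 ≤ u) (hv : 0 ≤ v) (h : u ^ 2 = v ^ 2) : u = v := by
  have h2 := congrArg Real.sqrt h
  rwa [Real.sqrt_sq hu, Real.sqrt_sq hv] at h2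

lemma r_lb {r : ℝ} (hr2 : r ^ 2 = 3) (hr0 : 0 < r) : 17/10 < r := by nlinarith

lemma r_ub {r : ℝ} (hr2 : r ^ 2 = 3) (hr0 : 0 < r) : r < 17561/10000 := by nlinarith

lemma nonneg_right_of_mul {a b : ℝ} (ha : 0 < a) (h : 0 ≤ a * b) : 0 ≤ b := by
  by_contra hb
  push_neg at hb
  nlinarith

lemma pos_right_of_mul {a b : ℝ} (ha : 0 < a) (h : 0 < a * b) : 0 < b := by
  by_contra hb
  push_neg at hb
  nlinarith

lemma lt_of_sq_lt' {a b : ℝ} (hb : 0 ≤ b) (h : a ^ 2 < b ^ 2) : a < b := by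
  nlinarith

lemma le_of_sq_le' {a b : ℝ} (hb : 0 ≤ b) (h : a ^ 2 ≤ b ^ 2) : a ≤ b := by
  nlinarith

set_option maxHeartbeats 1000000 in
theorem core_unique (r c s P1 Q1 P2 Q2 A1 B1 A2 B2 : ℝ)
    (hr2 : r ^ 2 = 3) (hr0 : 0 < r) (hc0 : 0 ≤ c) (hs0 : 0 < s) (hs1 : s ≤ 1)
    (hcs : c ^ 2 + s ^ 2 = 1)
    (hP1 : P1 = (1/9) * (3 - 4 * r) * c) (hQ1 : Q1 = (1/9) * (-3 - 4 * r) * s)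
    (hP2 : P2 = (1/9) * (-3 - 8 * r) * c) (hQ2 : Q2 = (1/9) * (-9 - 8 * r) * s)
    (hA1 : A1 = (2/9) * (3 + 2 * r)) (hB1 : B1 = (2/9) * (12 + 7 * r))
    (hA2 : A2 = (4/9) * (3 + 2 * r)) (hB2 : B2 = (2/9) * (9 + 5 * r)) :
    ∃! z : ℝ × ℝ, 1 < z.1 ∧ 0 < z.2 ∧
      (z.1 - P1) ^ 2 / A1 ^ 2 + (z.2 - Q1) ^ 2 / B1 ^ 2 - 1 = 0 ∧
      (z.1 - P2) ^ 2 / A2 ^ 2 + (z.2 - Q2) ^ 2 / B2 ^ 2 - 1 = 0 := by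
  -- basic bounds on r
  have hr17 : 17/10 < r := r_lb hr2 hr0
  have hr18 : r < 17561/10000 := r_ub hr2 hr0
  have h2r : 0 < 2 - r := by linarith
  have hrm1 : 0 < r - 1 := by linarith
  have hc1 : c < 1 := by
    clear * - hcs hs0 hc0
    nlinarith [mul_pos hs0 hs0]
  -- positivity of the axes
  have hA1p : 0 < A1 := by rw [hA1]; linarith
  have hB1p : 0 < B1 := by rw [hB1]; linarith
  have hA2p : 0 < A2 := by rw [hA2]; linarith
  have hB2p : 0 < B2 := by rw [hB2]; linarith
  -- key algebraic identities
  have hA1B1 : A1 = (2 - r) * B1 := by rw [hA1, hB1]; linear_combination (14/9 : ℝ) * hr2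
  have hA2B2 : A2 = (r - 1) * B2 := by rw [hA2, hB2]; linear_combination (-(10:ℝ)/9) * hr2
  -- signs of the centers
  have hrs : 0 < r * s := mul_pos hr0 hs0
  have hrc : 0 ≤ r * c := mul_nonneg hr0.le hc0
  have hQ1neg : Q1 < 0 := by rw [hQ1]; linarith
  have hQ2neg : Q2 < 0 := by rw [hQ2]; linarith
  have hQ21 : Q2 < Q1 := by rw [hQ1, hQ2]; linarith
  have hP1le : P1 ≤ 0 := by
    rw [hP1]
    have h43 := mul_nonneg (show (0:ℝ) ≤ 4 * r - 3 by linarith) hc0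
    linarith
  have hP2le : P2 ≤ 0 := by rw [hP2]; linarith
  have hP12 : P1 - P2 = (6 + 4 * r) / 9 * c := by rw [hP1, hP2]; ring
  have hP12n : 0 ≤ P1 - P2 := by rw [hP12]; exact mul_nonneg (by linarith) hc0
  -- the upper end of the admissible y-interval
  have hrs1 : r * s ≤ r := mul_le_of_le_one_right hr0.le hs1
  have hYpos : 0 < B2 + Q2 := by rw [hB2, hQ2]; linarith
  -- domain facts
  have harg1 : ∀ y : ℝ, 0 ≤ y → y ≤ B2 + Q2 → (18/5 : ℝ) ^ 2 < B1 ^ 2 - (y - Q1) ^ 2 := by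
    intro y h0 hle
    have h1 : 0 ≤ y - Q1 := by linarith
    have h2 : y - Q1 ≤ B2 := by linarith
    have h3 : (y - Q1) ^ 2 ≤ B2 ^ 2 := pow_le_pow_left₀ h1 h2 2
    have h4 : B2 ^ 2 + (18/5 : ℝ) ^ 2 < B1 ^ 2 := by
      rw [hB1, hB2]
      clear * - hr2 hr17
      nlinarith
    linarith
  have harg2 : ∀ y : ℝ, 0 ≤ y → y ≤ B2 + Q2 → 0 ≤ B2 ^ 2 - (y - Q2) ^ 2 := by
    intro y h0 hle
    have h1 : 0 ≤ y - Q2 := by linarith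
    have h2 : y - Q2 ≤ B2 := by linarith
    have h3 : (y - Q2) ^ 2 ≤ B2 ^ 2 := pow_le_pow_left₀ h1 h2 2
    linarith
  have harg1' : ∀ y : ℝ, 0 ≤ y → y ≤ B2 + Q2 → 0 ≤ B1 ^ 2 - (y - Q1) ^ 2 := by
    intro y h0 hle
    have := harg1 y h0 hle
    clear * - this
    linarith
  -- normal forms of the two ellipse equations
  have form1 : ∀ x y : ℝ,
      ((x - P1) ^ 2 / A1 ^ 2 + (y - Q1) ^ 2 / B1 ^ 2 - 1 = 0) ↔
      ((x - P1) ^ 2 = (2 - r) ^ 2 * (B1 ^ 2 - (y - Q1) ^ 2)) := by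
    intro x y
    have hA1n : A1 ≠ 0 := ne_of_gt hA1p
    have hB1n : B1 ≠ 0 := ne_of_gt hB1p
    rw [sub_eq_zero, div_add_div _ _ (pow_ne_zero 2 hA1n) (pow_ne_zero 2 hB1n),
      div_eq_one_iff_eq (mul_ne_zero (pow_ne_zero 2 hA1n) (pow_ne_zero 2 hB1n))]
    rw [hA1B1]
    constructor
    · intro H
      have H' : ((x - P1) ^ 2 - (2 - r) ^ 2 * (B1 ^ 2 - (y - Q1) ^ 2)) * B1 ^ 2 = 0 := by
        linear_combination H
      have h0 := (mul_eq_zero.mp H').resolve_right (pow_ne_zero 2 hB1n)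
      linarith
    · intro H
      linear_combination B1 ^ 2 * H
  have form2 : ∀ x y : ℝ,
      ((x - P2) ^ 2 / A2 ^ 2 + (y - Q2) ^ 2 / B2 ^ 2 - 1 = 0) ↔
      ((x - P2) ^ 2 = (r - 1) ^ 2 * (B2 ^ 2 - (y - Q2) ^ 2)) := by
    intro x y
    have hA2n : A2 ≠ 0 := ne_of_gt hA2p
    have hB2n : B2 ≠ 0 := ne_of_gt hB2p
    rw [sub_eq_zero, div_add_div _ _ (pow_ne_zero 2 hA2n) (pow_ne_zero 2 hB2n),
      div_eq_one_iff_eq (mul_ne_zero (pow_ne_zero 2 hA2n) (pow_ne_zero 2 hB2n))]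
    rw [hA2B2]
    constructor
    · intro H
      have H' : ((x - P2) ^ 2 - (r - 1) ^ 2 * (B2 ^ 2 - (y - Q2) ^ 2)) * B2 ^ 2 = 0 := by
        linear_combination H
      have h0 := (mul_eq_zero.mp H').resolve_right (pow_ne_zero 2 hB2n)
      linarith
    · intro H
      linear_combination B2 ^ 2 * H
  -- any solution in the region is on both right graphs
  have fwd : ∀ x y : ℝ, 1 < x → 0 < y →
      ((x - P1) ^ 2 = (2 - r) ^ 2 * (B1 ^ 2 - (y - Q1) ^ 2)) →
      ((x - P2) ^ 2 = (r - 1) ^ 2 * (B2 ^ 2 - (y - Q2) ^ 2)) →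
      x = P1 + (2 - r) * wfun B1 Q1 y ∧ x = P2 + (r - 1) * wfun B2 Q2 y ∧ y < B2 + Q2 := by
    intro x y hx hy h1 h2
    have hxP1 : 0 < x - P1 := by linarith
    have hxP2 : 0 < x - P2 := by linarith
    have harg1x : 0 ≤ B1 ^ 2 - (y - Q1) ^ 2 := by
      refine nonneg_right_of_mul (mul_pos h2r h2r) ?_
      have := sq_nonneg (x - P1)
      clear * - this h1
      linarith
    have harg2x : 0 ≤ B2 ^ 2 - (y - Q2) ^ 2 := by
      refine nonneg_right_of_mul (mul_pos hrm1 hrm1) ?_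
      have := sq_nonneg (x - P2)
      clear * - this h2
      linarith
    have hw1 := wfun_sq harg1x
    have hw2 := wfun_sq harg2x
    have hw1n := wfun_nonneg B1 Q1 y
    have hw2n := wfun_nonneg B2 Q2 y
    refine ⟨?_, ?_, ?_⟩
    · have heq : ((2 - r) * wfun B1 Q1 y) ^ 2 = (x - P1) ^ 2 := by
        rw [mul_pow, hw1]
        linear_combination -h1
      have := sq_inj (mul_nonneg h2r.le hw1n) hxP1.le heq
      linarith
    · have heq : ((r - 1) * wfun B2 Q2 y) ^ 2 = (x - P2) ^ 2 := by
        rw [mul_pow, hw2]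
        linear_combination -h2
      have := sq_inj (mul_nonneg hrm1.le hw2n) hxP2.le heq
      linarith
    · have hlt : (y - Q2) ^ 2 < B2 ^ 2 := by
        have hp : 0 < (r - 1) ^ 2 * (B2 ^ 2 - (y - Q2) ^ 2) := by
          rw [← h2]
          exact pow_pos hxP2 2
        have := pos_right_of_mul (by positivity) hp
        linarith
      have hyQ2 : 0 ≤ y - Q2 := by linarith
      have := lt_of_sq_lt' hB2p.le hlt
      linarith
  -- strict monotonicity of the difference of the two graphs
  have mono : ∀ y y' : ℝ, 0 ≤ y → y < y' → y' ≤ B2 + Q2 →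
      (P1 + (2 - r) * wfun B1 Q1 y) - (P2 + (r - 1) * wfun B2 Q2 y) <
      (P1 + (2 - r) * wfun B1 Q1 y') - (P2 + (r - 1) * wfun B2 Q2 y') := by
    intro y y' h0 hlt hle
    have hy'0 : 0 ≤ y' := le_trans h0 hlt.le
    have hyY : y ≤ B2 + Q2 := le_trans hlt.le hle
    have ha2 := wfun_sq (harg1' y h0 hyY)
    have ha2' := wfun_sq (harg1' y' hy'0 hle)
    have hb2 := wfun_sq (harg2 y h0 hyY)
    have hb2' := wfun_sq (harg2 y' hy'0 hle)
    have haL : 18/5 < wfun B1 Q1 y := wfun_gt (by norm_num) (harg1 y h0 hyY)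
    have haL' : 18/5 < wfun B1 Q1 y' := wfun_gt (by norm_num) (harg1 y' hy'0 hle)
    have hb0 := wfun_nonneg B2 Q2 y
    have hb0' := wfun_nonneg B2 Q2 y'
    have hbB : wfun B2 Q2 y ≤ B2 := le_of_sq_le' hB2p.le (by rw [hb2]; linarith [sq_nonneg (y - Q2)])
    have hbB' : wfun B2 Q2 y' ≤ B2 := le_of_sq_le' hB2p.le (by rw [hb2']; linarith [sq_nonneg (y' - Q2)])
    have ha'a : wfun B1 Q1 y' ≤ wfun B1 Q1 y :=
      wfun_anti (pow_le_pow_left₀ (by linarith) (by linarith) 2)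
    have hb'b : wfun B2 Q2 y' ≤ wfun B2 Q2 y :=
      wfun_anti (pow_le_pow_left₀ (by linarith) (by linarith) 2)
    have d1 : (wfun B1 Q1 y - wfun B1 Q1 y') * (wfun B1 Q1 y + wfun B1 Q1 y')
        = (y' - y) * (y + y' - 2 * Q1) := by linear_combination ha2 - ha2'
    have d2 : (wfun B2 Q2 y - wfun B2 Q2 y') * (wfun B2 Q2 y + wfun B2 Q2 y')
        = (y' - y) * (y + y' - 2 * Q2) := by linear_combination hb2 - hb2'
    have hT1 : 0 < y + y' - 2 * Q1 := by linarith
    have hT12 : y + y' - 2 * Q1 ≤ y + y' - 2 * Q2 := by linarith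
    have hE : 0 < y' - y := by linarith
    have s1 : (wfun B1 Q1 y - wfun B1 Q1 y') * (36/5) ≤ (y' - y) * (y + y' - 2 * Q1) := by
      have key := mul_nonneg (sub_nonneg.mpr ha'a)
        (show (0:ℝ) ≤ wfun B1 Q1 y + wfun B1 Q1 y' - 36/5 by linarith)
      clear * - key d1
      linarith
    have s2 : (y' - y) * (y + y' - 2 * Q2) ≤ (wfun B2 Q2 y - wfun B2 Q2 y') * (2 * B2) := by
      have key := mul_nonneg (sub_nonneg.mpr hb'b)
        (show (0:ℝ) ≤ 2 * B2 - (wfun B2 Q2 y + wfun B2 Q2 y') by linarith)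
      clear * - key d2
      linarith
    have s3 : 10 * (2 - r) * B2 < 36 * (r - 1) := by
      rw [hB2]
      clear * - hr2 hr17
      nlinarith
    have hV : 0 < (y' - y) * (y + y' - 2 * Q2) := mul_pos hE (by linarith)
    have key : (2 - r) * (wfun B1 Q1 y - wfun B1 Q1 y') <
        (r - 1) * (wfun B2 Q2 y - wfun B2 Q2 y') := by
      have hUV : (y' - y) * (y + y' - 2 * Q1) ≤ (y' - y) * (y + y' - 2 * Q2) :=
        mul_le_mul_of_nonneg_left hT12 hE.le
      have c1 : (2 - r) * ((wfun B1 Q1 y - wfun B1 Q1 y') * (36/5))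
          ≤ (2 - r) * ((y' - y) * (y + y' - 2 * Q1)) :=
        mul_le_mul_of_nonneg_left s1 h2r.le
      have c1' : ((2 - r) * ((wfun B1 Q1 y - wfun B1 Q1 y') * (36/5))) * (2 * B2)
          ≤ ((2 - r) * ((y' - y) * (y + y' - 2 * Q1))) * (2 * B2) :=
        mul_le_mul_of_nonneg_right c1 (by linarith)
      have c2 : ((2 - r) * ((y' - y) * (y + y' - 2 * Q1))) * (2 * B2)
          ≤ ((2 - r) * ((y' - y) * (y + y' - 2 * Q2))) * (2 * B2) :=
        mul_le_mul_of_nonneg_right (mul_le_mul_of_nonneg_left hUV h2r.le) (by linarith)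
      have c4 : ((y' - y) * (y + y' - 2 * Q2)) * ((2 - r) * (2 * B2))
          < ((y' - y) * (y + y' - 2 * Q2)) * ((36/5) * (r - 1)) := by
        apply mul_lt_mul_of_pos_left _ hV
        linarith
      have c5 : (r - 1) * ((y' - y) * (y + y' - 2 * Q2))
          ≤ (r - 1) * ((wfun B2 Q2 y - wfun B2 Q2 y') * (2 * B2)) :=
        mul_le_mul_of_nonneg_left s2 hrm1.le
      have c5' : (36/5) * ((r - 1) * ((y' - y) * (y + y' - 2 * Q2)))
          ≤ (36/5) * ((r - 1) * ((wfun B2 Q2 y - wfun B2 Q2 y') * (2 * B2))) :=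
        mul_le_mul_of_nonneg_left c5 (by norm_num)
      have big : ((2 - r) * (wfun B1 Q1 y - wfun B1 Q1 y')) * ((36/5) * (2 * B2))
          < ((r - 1) * (wfun B2 Q2 y - wfun B2 Q2 y')) * ((36/5) * (2 * B2)) := by
        clear * - c1' c2 c4 c5'
        linarith
      exact lt_of_mul_lt_mul_right big (by linarith)
    linarith
  -- strict decrease of the first graph function
  have wstrict : ∀ y y' : ℝ, 0 ≤ y → y < y' → y' ≤ B2 + Q2 →
      wfun B1 Q1 y' < wfun B1 Q1 y := by
    intro y y' h0 hlt hle
    have hy'0 : 0 ≤ y' := le_trans h0 hlt.le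
    have hyY : y ≤ B2 + Q2 := le_trans hlt.le hle
    have ha2 := wfun_sq (harg1' y h0 hyY)
    have ha2' := wfun_sq (harg1' y' hy'0 hle)
    have h1 : 0 ≤ y - Q1 := by linarith
    have h2 : y - Q1 < y' - Q1 := by linarith
    refine lt_of_sq_lt' (wfun_nonneg _ _ _) ?_
    rw [ha2, ha2']
    have := mul_self_lt_mul_self h1 h2
    clear * - this
    linarith
  -- value of the difference at y = 0 is negative
  have hs2le : s ^ 2 ≤ 1 := by
    clear * - hs0 hs1
    nlinarith
  have hs2pos : 0 < s ^ 2 := pow_pos hs0 2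
  have h0neg : (P1 + (2 - r) * wfun B1 Q1 0) - (P2 + (r - 1) * wfun B2 Q2 0) < 0 := by
    have hb1 : (wfun B1 Q1 0) ^ 2 = B1 ^ 2 - (0 - Q1) ^ 2 :=
      wfun_sq (harg1' 0 le_rfl hYpos.le)
    have hb2 : (wfun B2 Q2 0) ^ 2 = B2 ^ 2 - (0 - Q2) ^ 2 :=
      wfun_sq (harg2 0 le_rfl hYpos.le)
    have hβn := wfun_nonneg B1 Q1 0
    have hγn := wfun_nonneg B2 Q2 0
    have hX : (r - 1) ^ 2 * (wfun B2 Q2 0) ^ 2 - (2 - r) ^ 2 * (wfun B1 Q1 0) ^ 2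
        - ((6 + 4 * r) / 9 * c) ^ 2 = (168 + 96 * r) / 81 - (11 + 14 * r) / 27 * s ^ 2 := by
      rw [hb1, hb2, hQ1, hQ2, hB1, hB2]
      linear_combination (248/27 - 8/27 * s^2 - 16/81 * c^2 + 272/81 * r - 56/81 * r * s^2
        - 32/27 * r^2 - 16/27 * r^2 * s^2) * hr2 + (-28/27 - 16/27 * r) * hcs
    have hBsq : (2 - r) ^ 2 * (wfun B1 Q1 0) ^ 2
        = (84 + 48 * r) / 81 - (111 - 60 * r) / 81 * s ^ 2 := by
      rw [hb1, hQ1, hB1]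
      linear_combination (-740/81 - 25/81 * s^2 - 112/81 * r + 40/81 * r * s^2
        + 196/81 * r^2 - 16/81 * r^2 * s^2) * hr2
    have hrs2 : r * s ^ 2 ≤ r := mul_le_of_le_one_right hr0.le hs2le
    have hX1 : 0 < (r - 1) ^ 2 * (wfun B2 Q2 0) ^ 2 - (2 - r) ^ 2 * (wfun B1 Q1 0) ^ 2
        - ((6 + 4 * r) / 9 * c) ^ 2 := by
      rw [hX]
      clear * - hs2le hrs2 hr0
      linarith
    have hX2 : 4 * ((2 - r) ^ 2 * (wfun B1 Q1 0) ^ 2) * (((6 + 4 * r) / 9 * c) ^ 2)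
        < ((r - 1) ^ 2 * (wfun B2 Q2 0) ^ 2 - (2 - r) ^ 2 * (wfun B1 Q1 0) ^ 2
          - ((6 + 4 * r) / 9 * c) ^ 2) ^ 2 := by
      rw [hX, hBsq]
      have hid : ((168 + 96 * r) / 81 - (11 + 14 * r) / 27 * s ^ 2) ^ 2
          - 4 * ((84 + 48 * r) / 81 - (111 - 60 * r) / 81 * s ^ 2) * (((6 + 4 * r) / 9 * c) ^ 2)
          = s ^ 2 * ((23328 + 12960 * r) / 6561 + (3645 + 1620 * r) / 6561 * s ^ 2) := by
        linear_combination (1024/729 - 896/729 * s^2 + 196/729 * s^4 - 4864/2187 * c^2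
          - 1472/2187 * c^2 * s^2 - 1024/2187 * r * c^2 - 1280/2187 * r * c^2 * s^2) * hr2
          + (-6208/729 + 304/729 * s^2 - 3584/729 * r + 128/729 * r * s^2) * hcs
      have hco : 0 < (23328 + 12960 * r) / 6561 + (3645 + 1620 * r) / 6561 * s ^ 2 := by
        have h1 : 0 < r * s ^ 2 := mul_pos hr0 hs2pos
        clear * - h1 hs2pos hr0
        linarith
      have := mul_pos hs2pos hco
      linarith
    have hBCn : 0 ≤ ((2 - r) * wfun B1 Q1 0) * ((6 + 4 * r) / 9 * c) :=
      mul_nonneg (mul_nonneg h2r.le hβn) (mul_nonneg (by linarith) hc0)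
    have h2bc : 2 * (((2 - r) * wfun B1 Q1 0) * ((6 + 4 * r) / 9 * c))
        < (r - 1) ^ 2 * (wfun B2 Q2 0) ^ 2 - (2 - r) ^ 2 * (wfun B1 Q1 0) ^ 2
          - ((6 + 4 * r) / 9 * c) ^ 2 := by
      clear * - hX1 hX2 hBCn
      nlinarith
    have hfin : (2 - r) * wfun B1 Q1 0 + (6 + 4 * r) / 9 * c < (r - 1) * wfun B2 Q2 0 := by
      have hA0 : 0 ≤ (r - 1) * wfun B2 Q2 0 := mul_nonneg hrm1.le hγn
      have hBC0 : 0 ≤ (2 - r) * wfun B1 Q1 0 + (6 + 4 * r) / 9 * c :=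
        add_nonneg (mul_nonneg h2r.le hβn) (mul_nonneg (by linarith) hc0)
      clear * - h2bc hA0 hBC0
      nlinarith
    linarith [hP12, hfin]
  -- value of the difference at y = B2 + Q2 is positive
  have hw1Ygt : 18/5 < wfun B1 Q1 (B2 + Q2) :=
    wfun_gt (by norm_num) (harg1 (B2 + Q2) hYpos.le le_rfl)
  have hw2Y : wfun B2 Q2 (B2 + Q2) = 0 := by
    rw [wfun_def, show B2 ^ 2 - ((B2 + Q2) - Q2) ^ 2 = 0 from by ring, Real.sqrt_zero]
  have hYgt : 0 < (P1 + (2 - r) * wfun B1 Q1 (B2 + Q2))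
      - (P2 + (r - 1) * wfun B2 Q2 (B2 + Q2)) := by
    rw [hw2Y]
    have h1 : 0 < (2 - r) * wfun B1 Q1 (B2 + Q2) :=
      mul_pos h2r (lt_trans (by norm_num) hw1Ygt)
    linarith [hP12n]
  -- intermediate value theorem for the difference
  have hcont : ContinuousOn
      (fun y => (P1 + (2 - r) * wfun B1 Q1 y) - (P2 + (r - 1) * wfun B2 Q2 y))
      (Set.Icc 0 (B2 + Q2)) :=
    (((continuous_const.add (continuous_const.mul (wfun_cont B1 Q1))).sub
      (continuous_const.add (continuous_const.mul (wfun_cont B2 Q2))))).continuousOn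
  obtain ⟨ys, hysmem, hyseq⟩ := intermediate_value_Ioo hYpos.le hcont
    (Set.mem_Ioo.mpr ⟨h0neg, hYgt⟩)
  have hys0 : 0 < ys := hysmem.1
  have hysY : ys < B2 + Q2 := hysmem.2
  have hfys : (P1 + (2 - r) * wfun B1 Q1 ys) - (P2 + (r - 1) * wfun B2 Q2 ys) = 0 := hyseq
  have hsq1ys : (wfun B1 Q1 ys) ^ 2 = B1 ^ 2 - (ys - Q1) ^ 2 :=
    wfun_sq (harg1' ys hys0.le hysY.le)
  have hsq2ys : (wfun B2 Q2 ys) ^ 2 = B2 ^ 2 - (ys - Q2) ^ 2 :=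
    wfun_sq (harg2 ys hys0.le hysY.le)
  have e1s : ((P1 + (2 - r) * wfun B1 Q1 ys) - P1) ^ 2
      = (2 - r) ^ 2 * (B1 ^ 2 - (ys - Q1) ^ 2) := by
    linear_combination (2 - r) ^ 2 * hsq1ys
  have hxs2 : P1 + (2 - r) * wfun B1 Q1 ys = P2 + (r - 1) * wfun B2 Q2 ys := by linarith
  have e2s : ((P1 + (2 - r) * wfun B1 Q1 ys) - P2) ^ 2
      = (r - 1) ^ 2 * (B2 ^ 2 - (ys - Q2) ^ 2) := by
    rw [hxs2]
    linear_combination (r - 1) ^ 2 * hsq2ys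
  -- the first graph starts above 1
  have hg10 : 1 < P1 + (2 - r) * wfun B1 Q1 0 := by
    have hb1 : (wfun B1 Q1 0) ^ 2 = B1 ^ 2 - (0 - Q1) ^ 2 :=
      wfun_sq (harg1' 0 le_rfl hYpos.le)
    have hsqgt : (1 - P1) ^ 2 < (2 - r) ^ 2 * (wfun B1 Q1 0) ^ 2 := by
      rw [hb1, hP1, hQ1, hB1]
      have hid : (2 - r) ^ 2 * (((2/9) * (12 + 7 * r)) ^ 2 - (0 - (1/9) * (-3 - 4 * r) * s) ^ 2)
          - (1 - (1/9) * (3 - 4 * r) * c) ^ 2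
          = (1 - c) * ((12 * r - 12) / 9 + (4 * r - 6) / 9 * c) := by
        linear_combination (-740/81 - 25/81 * s^2 - 16/81 * c^2 - 112/81 * r + 40/81 * r * s^2
          + 196/81 * r^2 - 16/81 * r^2 * s^2) * hr2 + (-37/27 + 20/27 * r) * hcs
      have hfac : 0 < (12 * r - 12) / 9 + (4 * r - 6) / 9 * c := by
        have := mul_nonneg (show (0:ℝ) ≤ (4 * r - 6) / 9 by linarith) hc0
        linarith
      have := mul_pos (sub_pos.mpr hc1) hfac
      linarith [hid]
    have hwn := wfun_nonneg B1 Q1 0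
    have h1P1 : 0 < 1 - P1 := by linarith
    have hsqgt' : (1 - P1) ^ 2 < ((2 - r) * wfun B1 Q1 0) ^ 2 := by
      rw [mul_pow]; exact hsqgt
    have := lt_of_sq_lt' (mul_nonneg h2r.le hwn) hsqgt'
    linarith
  -- case B helper: where the first graph has height 1, the second graph is below 1
  have hcaseB : ∀ y1 : ℝ, 0 < y1 → y1 ≤ B2 + Q2 → (2 - r) * wfun B1 Q1 y1 = 1 - P1 →
      (r - 1) * wfun B2 Q2 y1 < 1 - P2 := by
    intro y1 h0 hle heq
    have hW1sq : (wfun B1 Q1 y1) ^ 2 = B1 ^ 2 - (y1 - Q1) ^ 2 := wfun_sq (harg1' y1 h0.le hle)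
    have hW2sq : (wfun B2 Q2 y1) ^ 2 = B2 ^ 2 - (y1 - Q2) ^ 2 := wfun_sq (harg2 y1 h0.le hle)
    have hW2n := wfun_nonneg B2 Q2 y1
    have h1P2 : 0 < 1 - P2 := by linarith
    have hy1Q1 : 0 < y1 - Q1 := by linarith
    have hνs : 0 ≤ (6 + 4 * r) / 9 * s := mul_nonneg (by linarith) hs0.le
    have hQ2eq : y1 - Q2 = (y1 - Q1) + (6 + 4 * r) / 9 * s := by
      rw [hQ1, hQ2]; ring
    have e2 : (y1 - Q1) ^ 2 + ((6 + 4 * r) / 9 * s) ^ 2 ≤ (y1 - Q2) ^ 2 := by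
      rw [hQ2eq]
      have := mul_nonneg hy1Q1.le hνs
      clear * - this
      linarith
    have eW1 : (2 - r) ^ 2 * (y1 - Q1) ^ 2 = (2 - r) ^ 2 * B1 ^ 2 - (1 - P1) ^ 2 := by
      have h' : ((2 - r) * wfun B1 Q1 y1) ^ 2 = (1 - P1) ^ 2 := by rw [heq]
      linear_combination (2 - r) ^ 2 * hW1sq - h'
    have hHcert : (r - 1) ^ 2 * ((2 - r) ^ 2 * B2 ^ 2 - (2 - r) ^ 2 * B1 ^ 2 + (1 - P1) ^ 2
        - (2 - r) ^ 2 * ((6 + 4 * r) / 9 * s) ^ 2) < (2 - r) ^ 2 * (1 - P2) ^ 2 := by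
      rw [hP1, hP2, hB1, hB2]
      have hmn : 0 < (97/27 - 2 * r) + (26 * r / 9 - 137/27) * c := by
        have t1 := mul_pos (sub_pos.mpr hc1)
          (show (0:ℝ) < 97/27 - 2 * r by linarith)
        have t2 := mul_nonneg hc0 (show (0:ℝ) ≤ 8 * r / 9 - 40/27 by linarith)
        clear * - t1 t2
        linarith
      have hid : (2 - r) ^ 2 * (1 - (1/9) * (-3 - 8 * r) * c) ^ 2
          - (r - 1) ^ 2 * ((2 - r) ^ 2 * ((2/9) * (9 + 5 * r)) ^ 2
            - (2 - r) ^ 2 * ((2/9) * (12 + 7 * r)) ^ 2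
            + (1 - (1/9) * (3 - 4 * r) * c) ^ 2
            - (2 - r) ^ 2 * ((6 + 4 * r) / 9 * s) ^ 2)
          = (1 - c) * ((97/27 - 2 * r) + (26 * r / 9 - 137/27) * c) := by
        linear_combination (-112/27 - 32/81 * s^2 - 4 * c + 16/9 * c^2 + 200/27 * r
          + 8/9 * r * s^2 + 8/9 * r * c - 152/81 * r * c^2 - 28/27 * r^2 + 4/81 * r^2 * s^2
          + 16/27 * r^2 * c^2 - 88/27 * r^3 - 16/27 * r^3 * s^2 + 32/27 * r^4
          + 16/81 * r^4 * s^2) * hr2 + (16/27 - 8/27 * r) * hcs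
      have := mul_pos (sub_pos.mpr hc1) hmn
      linarith [hid]
    have hsqlt : (r - 1) ^ 2 * (wfun B2 Q2 y1) ^ 2 < (1 - P2) ^ 2 := by
      have hW2sq' : (2 - r) ^ 2 * (r - 1) ^ 2 * (wfun B2 Q2 y1) ^ 2
          = (2 - r) ^ 2 * (r - 1) ^ 2 * (B2 ^ 2 - (y1 - Q2) ^ 2) := by rw [hW2sq]
      have m1 : (0:ℝ) ≤ (r - 1) ^ 2 * (2 - r) ^ 2 := by positivity
      have step := mul_le_mul_of_nonneg_left e2 m1
      have eW1' : (r - 1) ^ 2 * ((2 - r) ^ 2 * (y1 - Q1) ^ 2)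
          = (r - 1) ^ 2 * ((2 - r) ^ 2 * B1 ^ 2 - (1 - P1) ^ 2) := by rw [eW1]
      have hfin : (2 - r) ^ 2 * ((r - 1) ^ 2 * (wfun B2 Q2 y1) ^ 2)
          < (2 - r) ^ 2 * (1 - P2) ^ 2 := by
        clear * - hW2sq' step eW1' hHcert
        linarith
      exact lt_of_mul_lt_mul_left hfin (by positivity)
    have hsqlt' : ((r - 1) * wfun B2 Q2 y1) ^ 2 < (1 - P2) ^ 2 := by
      rw [mul_pow]; exact hsqlt
    have := lt_of_sq_lt' h1P2.le hsqlt'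
    linarith
  -- the intersection point lies to the right of x = 1
  have hxs1 : 1 < P1 + (2 - r) * wfun B1 Q1 ys := by
    rcases le_or_gt 1 (P1 + (2 - r) * wfun B1 Q1 (B2 + Q2)) with hA | hB
    · have hws := wstrict ys (B2 + Q2) hys0.le hysY le_rfl
      have := mul_pos h2r (sub_pos.mpr hws)
      linarith
    · have hcontg : ContinuousOn (fun y => P1 + (2 - r) * wfun B1 Q1 y)
          (Set.Icc 0 (B2 + Q2)) :=
        (continuous_const.add (continuous_const.mul (wfun_cont B1 Q1))).continuousOn
      obtain ⟨y1, hy1mem, hy1eq⟩ := intermediate_value_Ioo' hYpos.le hcontg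
        (Set.mem_Ioo.mpr ⟨hB, hg10⟩)
      have hy1eq' : P1 + (2 - r) * wfun B1 Q1 y1 = 1 := hy1eq
      have hkey := hcaseB y1 hy1mem.1 hy1mem.2.le (by linarith)
      have hfy1 : 0 < (P1 + (2 - r) * wfun B1 Q1 y1) - (P2 + (r - 1) * wfun B2 Q2 y1) := by
        linarith
      have hysy1 : ys < y1 := by
        rcases lt_trichotomy ys y1 with h | h | h
        · exact h
        · exfalso; rw [h] at hfys; linarith
        · exfalso
          have := mono y1 ys hy1mem.1.le h hysY.le
          linarith
      have hws := wstrict ys y1 hys0.le hysy1 hy1mem.2.le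
      have := mul_pos h2r (sub_pos.mpr hws)
      linarith
  -- assemble
  refine ⟨⟨P1 + (2 - r) * wfun B1 Q1 ys, ys⟩,
    ⟨hxs1, hys0, (form1 _ ys).mpr e1s, (form2 _ ys).mpr e2s⟩, ?_⟩
  rintro ⟨x, y⟩ ⟨hx1, hy0, H1, H2⟩
  obtain ⟨hg1x, hg2x, hyY⟩ := fwd x y hx1 hy0 ((form1 x y).mp H1) ((form2 x y).mp H2)
  have hfy : (P1 + (2 - r) * wfun B1 Q1 y) - (P2 + (r - 1) * wfun B2 Q2 y) = 0 := by
    rw [← hg1x, ← hg2x]; ring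
  have hyys : y = ys := by
    rcases lt_trichotomy y ys with h | h | h
    · exfalso
      have := mono y ys hy0.le h hysY.le
      linarith
    · exact h
    · exfalso
      have := mono ys y hys0.le h hyY.le
      linarith
  have hxx : x = P1 + (2 - r) * wfun B1 Q1 ys := by rw [← hyys]; exact hg1x
  simp only [Prod.mk.injEq]
  exact ⟨hxx, hyys⟩

/-- For every `φ ∈ (0, π/2]`, the two ellipses `e₁(ξ,η;φ) = 0` and `e₂(ξ,η;φ) = 0`
intersect at precisely one point in the region `{(ξ,η) : ξ > 1, η > 0}`. -/
theorem unique_intersection_of_ellipses (φ : ℝ) (hφ : φ ∈ Set.Ioc 0 (π / 2)) :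
    ∃! z : ℝ × ℝ, 1 < z.1 ∧ 0 < z.2 ∧
      (z.1 - (1/9) * (3 - 4 * Real.sqrt 3) * Real.cos φ) ^ 2 /
          ((2/9) * (3 + 2 * Real.sqrt 3)) ^ 2 +
        (z.2 - (1/9) * (-3 - 4 * Real.sqrt 3) * Real.sin φ) ^ 2 /
          ((2/9) * (12 + 7 * Real.sqrt 3)) ^ 2 - 1 = 0 ∧
      (z.1 - (1/9) * (-3 - 8 * Real.sqrt 3) * Real.cos φ) ^ 2 /
          ((4/9) * (3 + 2 * Real.sqrt 3)) ^ 2 +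
        (z.2 - (1/9) * (-9 - 8 * Real.sqrt 3) * Real.sin φ) ^ 2 /
          ((2/9) * (9 + 5 * Real.sqrt 3)) ^ 2 - 1 = 0 := by
  obtain ⟨hφ0, hφ2⟩ := hφ
  have hr2 : (Real.sqrt 3) ^ 2 = 3 := Real.sq_sqrt (by norm_num)
  have hr0 : 0 < Real.sqrt 3 := Real.sqrt_pos.mpr (by norm_num)
  have hc0 : 0 ≤ Real.cos φ := Real.cos_nonneg_of_mem_Icc
    ⟨by linarith [Real.pi_pos], hφ2⟩
  have hs0 : 0 < Real.sin φ := Real.sin_pos_of_pos_of_lt_pi hφ0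
    (lt_of_le_of_lt hφ2 (by linarith [Real.pi_pos]))
  have hs1 : Real.sin φ ≤ 1 := Real.sin_le_one φ
  have hcs : (Real.cos φ) ^ 2 + (Real.sin φ) ^ 2 = 1 := Real.cos_sq_add_sin_sq φ
  exact core_unique (Real.sqrt 3) (Real.cos φ) (Real.sin φ)
    ((1/9) * (3 - 4 * Real.sqrt 3) * Real.cos φ)
    ((1/9) * (-3 - 4 * Real.sqrt 3) * Real.sin φ)
    ((1/9) * (-3 - 8 * Real.sqrt 3) * Real.cos φ)
    ((1/9) * (-9 - 8 * Real.sqrt 3) * Real.sin φ)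
    ((2/9) * (3 + 2 * Real.sqrt 3)) ((2/9) * (12 + 7 * Real.sqrt 3))
    ((4/9) * (3 + 2 * Real.sqrt 3)) ((2/9) * (9 + 5 * Real.sqrt 3))
    hr2 hr0 hc0 hs0 hs1 hcs rfl rfl rfl rfl rfl rfl rfl rfl
end

section
/- For every φ ∈ (0, π/2], there exists a unique pair (ξ*, η*) with ξ* > 1 and η* > 0 such that the cubic Bézier curve p₃(t) = Σ_{j=0}^{3} B_j³(t) b_j with control points b₀ = (cos φ, -sin φ), b₁ = (ξ*, -η*), b₂ = (ξ*, η*), b₃ = (cos φ, sin φ) satisfies ‖p₃(2-√3)‖² = 1 and ‖p₃(√3-1)‖² = 1. -/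
/-!
Write `c = cos φ`, `s = sin φ`. With `m = (1 - t²) / 4` the curve is
`p(t) = (c + 3m (ξ - c), t (s + m (3η - s)))`, and the nodes are chosen so that `m` at `2 - √3`
is twice `m` at `√3 - 1`. Hence, with `(P, V) = p(√3 - 1)` (an affine bijective function of
`(ξ, η)`), `p(2 - √3) = (2P - c, (√3 - 1) V - (2 - √3) s)`, and the problem is to intersect the
unit circle `P² + V² = 1` with the ellipse `(2P - c)² + ((√3 - 1) V - (2 - √3) s)² = 1` in the
quadrant `P > P₀`, `V > V₀` whose corner `(P₀, V₀)` is the value of `p(√3 - 1)` at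
`(ξ, η) = (1, 0)`.

Subtracting the equations at two intersection points gives a linear system in their differences
whose determinant is positive because `(√3 - 1)² < 2`, so there is at most one. One exists by the
intermediate value theorem along the arc of the circle from its lower endpoint `P = P₀` to its
upper endpoint `V = V₀`: the left side of the ellipse equation is `< 1` at the first and `> 1` at
the second, which after squaring comes down to polynomial inequalities in `c` with a factor `1 - c`.
-/

open Real Function

lemma bijective_mul_add {α : ℝ} (hα : α ≠ 0) (β : ℝ) : Bijective fun x : ℝ ↦ α * x + β :=
  (Equiv.addRight β).bijective.comp (Equiv.mulLeft₀ α hα).bijective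

lemma EuclideanSpace.norm_sq_vec_two (x y : ℝ) :
    ‖(!₂[x, y] : EuclideanSpace ℝ (Fin 2))‖ ^ 2 = x ^ 2 + y ^ 2 := by
  simp [EuclideanSpace.real_norm_sq_eq, Fin.sum_univ_two]

section CircleEllipse

variable {c lam d : ℝ}

lemma eq_of_circle_ellipse_inter {P V P' V' : ℝ} (hc : 0 ≤ c) (hP : c < P) (hP' : c < P')
    (hV : 0 < V) (hV' : 0 < V') (hlam : lam ^ 2 < 2) (hd : 0 ≤ lam * d)
    (h₁ : (2 * P - c) ^ 2 + (lam * V - d) ^ 2 = 1) (h₂ : P ^ 2 + V ^ 2 = 1)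
    (h₁' : (2 * P' - c) ^ 2 + (lam * V' - d) ^ 2 = 1) (h₂' : P' ^ 2 + V' ^ 2 = 1) :
    P = P' ∧ V = V' := by
  set S := P + P'
  set T := V + V'
  have hS : 0 < S := by linarith
  have hT : 0 < T := by linarith
  have hdet : 0 < 4 * T * (S - c) - lam ^ 2 * S * T + 2 * lam * d * S := by
    nlinarith [mul_pos (mul_pos hS hT) (sub_pos.2 hlam),
      mul_nonneg hT.le (show 0 ≤ S - 2 * c by linarith), mul_nonneg hd hS.le]
  have hPdet : (P' - P) * (4 * T * (S - c) - lam ^ 2 * S * T + 2 * lam * d * S) = 0 := by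
    linear_combination T * (h₁' - h₁) - lam * (lam * T - 2 * d) * (h₂' - h₂)
  obtain rfl : P = P' := by linarith [(mul_eq_zero.1 hPdet).resolve_right hdet.ne']
  have hVT : (V' - V) * T = 0 := by linear_combination h₂' - h₂
  exact ⟨rfl, by linarith [(mul_eq_zero.1 hVT).resolve_right hT.ne']⟩

lemma exists_circle_ellipse_inter {a v₀ : ℝ} (ha : 0 ≤ a) (hv₀ : 0 ≤ v₀)
    (hcorner : a ^ 2 + v₀ ^ 2 < 1)
    (hlo : (2 * a - c) ^ 2 + (lam * √(1 - a ^ 2) - d) ^ 2 < 1)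
    (hhi : 1 < (2 * √(1 - v₀ ^ 2) - c) ^ 2 + (lam * v₀ - d) ^ 2) :
    ∃ P V : ℝ, a < P ∧ v₀ < V ∧ (2 * P - c) ^ 2 + (lam * V - d) ^ 2 = 1 ∧ P ^ 2 + V ^ 2 = 1 := by
  set F : ℝ → ℝ := fun P ↦ (2 * P - c) ^ 2 + (lam * √(1 - P ^ 2) - d) ^ 2
  set b := √(1 - v₀ ^ 2)
  have hb : b ^ 2 = 1 - v₀ ^ 2 := sq_sqrt (by nlinarith)
  have hab : a < b := (lt_sqrt ha).2 (by linarith)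
  have hFb : F b = (2 * b - c) ^ 2 + (lam * v₀ - d) ^ 2 := by
    simp only [F, show 1 - b ^ 2 = v₀ ^ 2 by linarith, sqrt_sq hv₀]
  obtain ⟨P, ⟨haP, hPb⟩, hFP⟩ : ∃ P ∈ Set.Ioo a b, F P = 1 :=
    intermediate_value_Ioo hab.le (by fun_prop) ⟨hlo, hFb ▸ hhi⟩
  have hP : P ^ 2 < 1 - v₀ ^ 2 := by nlinarith
  refine ⟨P, √(1 - P ^ 2), haP, (lt_sqrt hv₀).2 (by linarith), hFP, ?_⟩
  rw [sq_sqrt (by nlinarith)]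
  ring

lemma existsUnique_circle_ellipse_inter {a v₀ : ℝ} (hc : 0 ≤ c) (hca : c ≤ a) (hv₀ : 0 ≤ v₀)
    (hlam : lam ^ 2 < 2) (hd : 0 ≤ lam * d) (hcorner : a ^ 2 + v₀ ^ 2 < 1)
    (hlo : (2 * a - c) ^ 2 + (lam * √(1 - a ^ 2) - d) ^ 2 < 1)
    (hhi : 1 < (2 * √(1 - v₀ ^ 2) - c) ^ 2 + (lam * v₀ - d) ^ 2) :
    ∃! w : ℝ × ℝ, a < w.1 ∧ v₀ < w.2 ∧
      (2 * w.1 - c) ^ 2 + (lam * w.2 - d) ^ 2 = 1 ∧ w.1 ^ 2 + w.2 ^ 2 = 1 := by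
  obtain ⟨P, V, hP, hV, h₁, h₂⟩ := exists_circle_ellipse_inter (hc.trans hca) hv₀ hcorner hlo hhi
  refine ⟨(P, V), ⟨hP, hV, h₁, h₂⟩, fun w ⟨hP', hV', h₁', h₂'⟩ ↦ ?_⟩
  obtain ⟨rfl, rfl⟩ := eq_of_circle_ellipse_inter hc (hca.trans_lt hP') (hca.trans_lt hP)
    (hv₀.trans_lt hV') (hv₀.trans_lt hV) hlam hd h₁' h₂' h₁ h₂
  rfl

end CircleEllipse

noncomputable def symmetricCubicBezier (c s : ℝ) (z : ℝ × ℝ) (t : ℝ) :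
    EuclideanSpace ℝ (Fin 2) :=
  ((1 - t) / 2) ^ 3 • (!₂[c, -s] : EuclideanSpace ℝ (Fin 2)) +
    (3 * ((1 + t) / 2) * ((1 - t) / 2) ^ 2) • (!₂[z.1, -z.2] : EuclideanSpace ℝ (Fin 2)) +
    (3 * ((1 + t) / 2) ^ 2 * ((1 - t) / 2)) • (!₂[z.1, z.2] : EuclideanSpace ℝ (Fin 2)) +
    ((1 + t) / 2) ^ 3 • (!₂[c, s] : EuclideanSpace ℝ (Fin 2))

lemma symmetricCubicBezier_eq (c s : ℝ) (z : ℝ × ℝ) (t : ℝ) :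
    symmetricCubicBezier c s z t =
      !₂[c + 3 * ((1 - t ^ 2) / 4) * (z.1 - c), t * (s + (1 - t ^ 2) / 4 * (3 * z.2 - s))] := by
  ext i
  fin_cases i
  · simp only [symmetricCubicBezier, Fin.zero_eta, Fin.isValue, PiLp.add_apply, PiLp.smul_apply,
      Matrix.cons_val_zero, smul_eq_mul]
    ring
  · simp only [symmetricCubicBezier, Fin.mk_one, Fin.isValue, PiLp.add_apply, PiLp.smul_apply,
      Matrix.cons_val_one, Matrix.cons_val_fin_one, smul_eq_mul, mul_neg]
    ring

lemma symmetricCubicBezier_sqrt_three_sub_one (c s : ℝ) (z : ℝ × ℝ) :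
    symmetricCubicBezier c s z (√3 - 1) =
      !₂[(6 * √3 - 9) / 4 * z.1 + (13 - 6 * √3) / 4 * c,
        (27 - 15 * √3) / 4 * z.2 + (9 * √3 - 13) / 4 * s] := by
  have h3 : √3 ^ 2 = 3 := sq_sqrt (by norm_num)
  rw [symmetricCubicBezier_eq]
  ext i
  fin_cases i
  · simp only [Fin.zero_eta, Fin.isValue, Matrix.cons_val_zero]
    linear_combination (3 / 4 * c - 3 / 4 * z.1) * h3
  · simp only [Fin.mk_one, Fin.isValue, Matrix.cons_val_one, Matrix.cons_val_fin_one]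
    linear_combination (√3 * (s - 3 * z.2) / 4 - 3 / 4 * s + 9 / 4 * z.2) * h3

lemma symmetricCubicBezier_two_sub_sqrt_three (c s : ℝ) (z : ℝ × ℝ) :
    symmetricCubicBezier c s z (2 - √3) =
      !₂[2 * symmetricCubicBezier c s z (√3 - 1) 0 - c,
        (√3 - 1) * symmetricCubicBezier c s z (√3 - 1) 1 - (2 - √3) * s] := by
  have h3 : √3 ^ 2 = 3 := sq_sqrt (by norm_num)
  rw [symmetricCubicBezier_sqrt_three_sub_one, symmetricCubicBezier_eq]
  ext i
  fin_cases i
  · simp only [Fin.zero_eta, Fin.isValue, Matrix.cons_val_zero, Matrix.cons_val_one,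
      Matrix.cons_val_fin_one]
    linear_combination (3 / 4 * c - 3 / 4 * z.1) * h3
  · simp only [Fin.mk_one, Fin.isValue, Matrix.cons_val_one, Matrix.cons_val_fin_one,
      Matrix.cons_val_zero]
    linear_combination (√3 * (3 * z.2 - s) / 4 - 3 / 4 * (s + z.2)) * h3

lemma sqrt_three_bounds : 1.7320504 < √3 ∧ √3 < 1.7320509 := by
  have h3 : √3 ^ 2 = 3 := sq_sqrt (by norm_num)
  have h0 : 0 < √3 := by positivity
  constructor <;> nlinarith

section SqrtThree

variable {c s a v₀ : ℝ}

lemma corner_sq_add_sq_lt_one (hc1 : c < 1) (hcs : c ^ 2 + s ^ 2 = 1)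
    (ha : a = (6 * √3 - 9) / 4 + (13 - 6 * √3) / 4 * c) (hv₀ : v₀ = (9 * √3 - 13) / 4 * s) :
    a ^ 2 + v₀ ^ 2 < 1 := by
  have h3 : √3 ^ 2 = 3 := sq_sqrt (by norm_num)
  obtain ⟨hlo, hhi⟩ := sqrt_three_bounds
  have hid : 1 - a ^ 2 - v₀ ^ 2 = (1 - c) * ((342 * √3 - 585) / 16 + (78 * √3 - 135) / 16 * c) := by
    linear_combination (9 / 4 - a - 13 / 4 * c - 3 / 2 * √3 + 3 / 2 * c * √3) * ha
      + (13 / 4 * s - v₀ - 9 / 4 * √3 * s) * hv₀ + (-103 / 4 + 117 / 8 * √3) * hcs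
      + (-9 / 4 + 9 / 2 * c - 9 / 4 * c ^ 2 - 81 / 16 * s ^ 2) * h3
  have : 0 < (1 - c) * ((342 * √3 - 585) / 16 + (78 * √3 - 135) / 16 * c) :=
    mul_pos (by linarith) (by nlinarith)
  linarith

lemma lower_endpoint_lt_one (hc0 : 0 ≤ c) (hc1 : c < 1) (hs : 0 < s) (hcs : c ^ 2 + s ^ 2 = 1)
    (ha : a = (6 * √3 - 9) / 4 + (13 - 6 * √3) / 4 * c) :
    (2 * a - c) ^ 2 + ((√3 - 1) * √(1 - a ^ 2) - (2 - √3) * s) ^ 2 < 1 := by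
  have h3 : √3 ^ 2 = 3 := sq_sqrt (by norm_num)
  obtain ⟨hlo, hhi⟩ := sqrt_three_bounds
  have ha0 : 0 ≤ a := by nlinarith
  have ha1 : a < 1 := by nlinarith
  set u := √(1 - a ^ 2)
  have hu : u ^ 2 = 1 - a ^ 2 := sq_sqrt (by nlinarith)
  set L := (1 - c) * ((141 * √3 - 244) + (620 - 357 * √3) * c) / 8
  have hid : (2 * a - c) ^ 2 + ((√3 - 1) * u - (2 - √3) * s) ^ 2
      = 1 + L - 2 * (3 * √3 - 5) * (s * u) := by
    linear_combination (4 - 2 * √3) * hu + (7 - 4 * √3) * hcs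
      + (9 - 13 * c - 9 / 2 * √3 + 2 * a * √3 + 13 / 2 * c * √3) * ha
      + (-27 / 4 + 3 * a + 33 / 2 * c - 3 * a * c - 39 / 4 * c ^ 2 + 2 * s * u + s ^ 2 + u ^ 2) * h3
  set R := (30213 / 8 * √3 - 418635 / 64) + (380115 / 32 - 6858 * √3) * c
      + (22491 / 8 * √3 - 311643 / 64) * c ^ 2
  have hsq : (2 * (3 * √3 - 5) * (s * u)) ^ 2 - L ^ 2 = (1 - c) ^ 2 * R := by
    rw [mul_pow, mul_pow s, hu, show s ^ 2 = 1 - c ^ 2 by linarith, ha]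
    linear_combination (-111033 / 64 + 90189 / 16 * c - 193347 / 32 * c ^ 2 + 33813 / 16 * c ^ 3
      + 1719 / 64 * c ^ 4 + 513 * √3 - 1134 * √3 * c + 108 * √3 * c ^ 2 + 1134 * √3 * c ^ 3
      - 621 * √3 * c ^ 4 - 81 * √3 ^ 2 + 162 * √3 ^ 2 * c - 162 * √3 ^ 2 * c ^ 3
      + 81 * √3 ^ 2 * c ^ 4) * h3
  have hR : 0 < R := by
    have := mul_nonneg (show 0 ≤ 380115 / 32 - 6858 * √3 by linarith) hc0
    have := mul_nonneg (show 0 ≤ 22491 / 8 * √3 - 311643 / 64 by linarith) (sq_nonneg c)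
    simp only [R]; linarith
  have hL : L < 2 * (3 * √3 - 5) * (s * u) :=
    (le_abs_self L).trans_lt <| abs_lt_of_sq_lt_sq
      (by nlinarith [mul_pos (pow_pos (sub_pos.2 hc1) 2) hR])
      (mul_nonneg (by linarith) (mul_nonneg hs.le (sqrt_nonneg _)))
  linarith

lemma one_lt_upper_endpoint (hc0 : 0 ≤ c) (hc1 : c < 1) (hcs : c ^ 2 + s ^ 2 = 1)
    (hv₀ : v₀ = (9 * √3 - 13) / 4 * s) :
    1 < (2 * √(1 - v₀ ^ 2) - c) ^ 2 + ((√3 - 1) * v₀ - (2 - √3) * s) ^ 2 := by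
  have h3 : √3 ^ 2 = 3 := sq_sqrt (by norm_num)
  obtain ⟨hlo, hhi⟩ := sqrt_three_bounds
  set b := √(1 - v₀ ^ 2)
  have hb : b ^ 2 = 1 - v₀ ^ 2 := sq_sqrt (by
    rw [hv₀, mul_pow]; nlinarith [mul_nonneg (sq_nonneg ((9 * √3 - 13) / 4)) (sq_nonneg s)])
  set M := (99 - 54 * √3) / 4 + (54 * √3 - 83) / 4 * c ^ 2
  have hid : (2 * b - c) ^ 2 + ((√3 - 1) * v₀ - (2 - √3) * s) ^ 2 = 1 + M - 4 * c * b := by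
    linear_combination 4 * hb + (-7 / 2 * s + 1 / 2 * √3 * s - 2 * √3 * v₀) * hv₀
      + (87 / 4 - 27 / 2 * √3) * hcs + (-5 / 2 * s * v₀ + 17 / 8 * s ^ 2 + v₀ ^ 2) * h3
  set Q := (18549 - 10692 * √3) / 16 * (1 - c ^ 2) + (9504 - 5472 * √3) / 16 * c ^ 2
  have hsq : M ^ 2 - (4 * c * b) ^ 2 = (1 - c) * (1 + c) * Q := by
    rw [mul_pow, hb]
    linear_combination (-52 * c ^ 2 * s + 16 * c ^ 2 * v₀ + 36 * c ^ 2 * √3 * s) * hv₀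
      + (412 * c ^ 2 - 234 * c ^ 2 * √3) * hcs
      + (729 / 4 - 729 / 2 * c ^ 2 + 81 * c ^ 2 * s ^ 2 + 729 / 4 * c ^ 4) * h3
  have hQ : 0 < Q := by
    have := mul_pos (show 0 < (18549 - 10692 * √3) / 16 by linarith)
      (show 0 < 1 - c ^ 2 by nlinarith)
    have := mul_nonneg (show 0 ≤ (9504 - 5472 * √3) / 16 by linarith) (sq_nonneg c)
    simp only [Q]; linarith
  have hM : 0 ≤ M := by
    have := mul_nonneg (show 0 ≤ (54 * √3 - 83) / 4 by linarith) (sq_nonneg c)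
    simp only [M]; linarith
  have hcb : 4 * c * b < M :=
    (le_abs_self _).trans_lt <| abs_lt_of_sq_lt_sq
      (by nlinarith [mul_pos (mul_pos (sub_pos.2 hc1) (by linarith : 0 < 1 + c)) hQ]) hM
  linarith

lemma existsUnique_node_values (hc0 : 0 ≤ c) (hc1 : c < 1) (hs : 0 < s)
    (hcs : c ^ 2 + s ^ 2 = 1) :
    ∃! w : ℝ × ℝ, (6 * √3 - 9) / 4 + (13 - 6 * √3) / 4 * c < w.1 ∧
      (9 * √3 - 13) / 4 * s < w.2 ∧
      (2 * w.1 - c) ^ 2 + ((√3 - 1) * w.2 - (2 - √3) * s) ^ 2 = 1 ∧ w.1 ^ 2 + w.2 ^ 2 = 1 := by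
  obtain ⟨hlo, hhi⟩ := sqrt_three_bounds
  exact existsUnique_circle_ellipse_inter hc0 (by nlinarith) (by nlinarith) (by nlinarith)
    (mul_nonneg (by linarith) (mul_nonneg (by linarith) hs.le))
    (corner_sq_add_sq_lt_one hc1 hcs rfl rfl) (lower_endpoint_lt_one hc0 hc1 hs hcs rfl)
    (one_lt_upper_endpoint hc0 hc1 hcs rfl)

end SqrtThree

/-- For every `φ ∈ (0, π/2]`, there exists a unique pair `(ξ*, η*)` with `ξ* > 1`,
`η* > 0` such that the cubic Bézier curve with control points `(cos φ, -sin φ)`,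
`(ξ*, -η*)`, `(ξ*, η*)`, `(cos φ, sin φ)` satisfies `‖p₃(2-√3)‖² = 1` and
`‖p₃(√3-1)‖² = 1`. -/
theorem cubic_G0_unique_admissible_solution (φ : ℝ) (hφ : φ ∈ Set.Ioc 0 (π / 2))
    (p₃ : ℝ × ℝ → ℝ → EuclideanSpace ℝ (Fin 2))
    (hp₃ : ∀ z : ℝ × ℝ, ∀ t : ℝ, p₃ z t =
      ((1 - t) / 2) ^ 3 • (!₂[Real.cos φ, -Real.sin φ] : EuclideanSpace ℝ (Fin 2)) +
      (3 * ((1 + t) / 2) * ((1 - t) / 2) ^ 2) • (!₂[z.1, -z.2] : EuclideanSpace ℝ (Fin 2)) +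
      (3 * ((1 + t) / 2) ^ 2 * ((1 - t) / 2)) • (!₂[z.1, z.2] : EuclideanSpace ℝ (Fin 2)) +
      ((1 + t) / 2) ^ 3 • (!₂[Real.cos φ, Real.sin φ] : EuclideanSpace ℝ (Fin 2))) :
    ∃! z : ℝ × ℝ, 1 < z.1 ∧ 0 < z.2 ∧
      ‖p₃ z (2 - Real.sqrt 3)‖ ^ 2 = 1 ∧ ‖p₃ z (Real.sqrt 3 - 1)‖ ^ 2 = 1 := by
  obtain rfl : p₃ = symmetricCubicBezier (cos φ) (sin φ) := funext₂ hp₃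
  obtain ⟨hφ0, hφ1⟩ := hφ
  have hs : 0 < sin φ := sin_pos_of_pos_of_lt_pi hφ0 (by linarith [pi_pos])
  have hc0 : 0 ≤ cos φ := cos_nonneg_of_mem_Icc ⟨by linarith [pi_pos], hφ1⟩
  have hc1 : cos φ < 1 := by
    simpa using cos_lt_cos_of_nonneg_of_le_pi le_rfl (by linarith [pi_pos]) hφ0
  obtain ⟨hlo, hhi⟩ := sqrt_three_bounds
  have hk₁ : 0 < (6 * √3 - 9) / 4 := by linarith
  have hk₂ : 0 < (27 - 15 * √3) / 4 := by linarith
  have hnode := ((bijective_mul_add hk₁.ne' ((13 - 6 * √3) / 4 * cos φ)).prodMap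
    (bijective_mul_add hk₂.ne' ((9 * √3 - 13) / 4 * sin φ))).existsUnique_iff.1
    (existsUnique_node_values hc0 hc1 hs (cos_sq_add_sin_sq φ))
  refine (existsUnique_congr fun z ↦ ?_).2 hnode
  simp only [symmetricCubicBezier_two_sub_sqrt_three, symmetricCubicBezier_sqrt_three_sub_one,
    EuclideanSpace.norm_sq_vec_two, PiLp.toLp_apply, Matrix.cons_val_zero, Matrix.cons_val_one,
    Prod.map_fst, Prod.map_snd]
  refine and_congr ?_ (and_congr ?_ Iff.rfl)
  · rw [add_lt_add_iff_right, lt_mul_iff_one_lt_right hk₁]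
  · rw [lt_add_iff_pos_left, mul_pos_iff_of_pos_left hk₂]
end

section
/- Let ξ* = 4√(2 + 4√3)/9 and η* = (5 + 2√3)/9, and consider the cubic Bézier curve p₃(t) = Σ_{j=0}^{3} B_j³(t) b_j with control points b₀ = (0, -1), b₁ = (ξ*, -η*), b₂ = (ξ*, η*), b₃ = (0, 1). Then ‖p₃(2-√3)‖² = 1 and ‖p₃(√3-1)‖² = 1, and ξ* > 1, η* > 0; that is, (ξ*, η*) is the unique admissible solution of the cubic G⁰ approximation problem for the half circle (φ = π/2). -/
open Real

/-!
The control polygon is symmetric about the `x`-axis, so with `b₁ = (a, -b)` the curve is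
`p₃(t) = (3(1-t²)a/4, t(3+t²+3(1-t²)b)/4)`. At `t = 2-√3` and `t = √3-1` the weight `1-t²` is `2c`
and `c`, with `c = 2√3-3`, so `a` drops out of `4‖p₃(√3-1)‖² - ‖p₃(2-√3)‖² = 3`. This leaves
`(18√3-29 + 3c²b)(1 + cb) = 4`, whose left side is increasing in `b ≥ 0`; hence `b = η*`, and then
either condition reads `a² = ξ*²`.
-/

noncomputable def cubicBezier {E : Type*} [AddCommGroup E] [Module ℝ E] (b₀ b₁ b₂ b₃ : E)
    (t : ℝ) : E :=
  ((1 - t) / 2) ^ 3 • b₀ + (3 * ((1 + t) / 2) * ((1 - t) / 2) ^ 2) • b₁ +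
    (3 * ((1 + t) / 2) ^ 2 * ((1 - t) / 2)) • b₂ + ((1 + t) / 2) ^ 3 • b₃

theorem strictMonoOn_affine_mul_affine {p q r u : ℝ} (hp : 0 ≤ p) (hq : 0 < q) (hr : 0 ≤ r)
    (hu : 0 < u) : StrictMonoOn (fun x ↦ (p + q * x) * (r + u * x)) (Set.Ici 0) := by
  intro x (hx : 0 ≤ x) y _ hxy
  exact mul_lt_mul'' (by gcongr) (by gcongr) (by positivity) (by positivity)

namespace CubicG0HalfCircle

noncomputable def curve (a b : ℝ) : ℝ → EuclideanSpace ℝ (Fin 2) :=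
  cubicBezier !₂[0, -1] !₂[a, -b] !₂[a, b] !₂[0, 1]

theorem curve_eq (a b t : ℝ) :
    curve a b t = !₂[3 * (1 - t ^ 2) * a / 4, t * (3 + t ^ 2 + 3 * (1 - t ^ 2) * b) / 4] := by
  ext i
  fin_cases i <;> simp [curve, cubicBezier] <;> ring

theorem norm_sq_curve (a b t : ℝ) :
    ‖curve a b t‖ ^ 2 =
      (3 * (1 - t ^ 2) * a / 4) ^ 2 + (t * (3 + t ^ 2 + 3 * (1 - t ^ 2) * b) / 4) ^ 2 := by
  simp [curve_eq, EuclideanSpace.norm_sq_eq]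

theorem sqrt_three_sq : √3 ^ 2 = 3 :=
  Real.sq_sqrt (by norm_num)

theorem norm_sq_curve_two_sub_sqrt_three (a b : ℝ) :
    ‖curve a b (2 - √3)‖ ^ 2 =
      (3 * (2 * √3 - 3) * a / 2) ^ 2 +
        ((2 - √3) * (5 - 2 * √3 + 3 * (2 * √3 - 3) * b) / 2) ^ 2 := by
  have := sqrt_three_sq
  rw [norm_sq_curve]
  grind

theorem norm_sq_curve_sqrt_three_sub_one (a b : ℝ) :
    ‖curve a b (√3 - 1)‖ ^ 2 =
      (3 * (2 * √3 - 3) * a / 4) ^ 2 +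
        ((√3 - 1) * (7 - 2 * √3 + 3 * (2 * √3 - 3) * b) / 4) ^ 2 := by
  have := sqrt_three_sq
  rw [norm_sq_curve]
  grind

theorem eq_eta_of_norm_sq_curve_eq_one {a b : ℝ} (hb : 0 < b)
    (h₁ : ‖curve a b (2 - √3)‖ ^ 2 = 1) (h₂ : ‖curve a b (√3 - 1)‖ ^ 2 = 1) :
    b = (5 + 2 * √3) / 9 := by
  rw [norm_sq_curve_two_sub_sqrt_three] at h₁
  rw [norm_sq_curve_sqrt_three_sub_one] at h₂
  have hs := sqrt_three_sq
  have hs_gt : 29 / 18 < √3 := by rw [Real.lt_sqrt] <;> norm_num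
  have hc : 0 < 2 * √3 - 3 := by linarith
  let f : ℝ → ℝ := fun x ↦ (18 * √3 - 29 + 3 * (2 * √3 - 3) ^ 2 * x) * (1 + (2 * √3 - 3) * x)
  have hfb : f b = 4 := by grind
  have hfη : f ((5 + 2 * √3) / 9) = 4 := by grind
  have hf : StrictMonoOn f (Set.Ici 0) :=
    strictMonoOn_affine_mul_affine (by linarith) (by positivity) zero_le_one hc
  exact hf.injOn hb.le (Set.mem_Ici.mpr (by positivity)) (hfb.trans hfη.symm)

theorem norm_sq_curve_eta_two_sub_sqrt_three (a : ℝ) :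
    ‖curve a ((5 + 2 * √3) / 9) (2 - √3)‖ ^ 2 =
      1 + (3 * (2 * √3 - 3) / 2) ^ 2 * (a ^ 2 - 16 * (2 + 4 * √3) / 81) := by
  have := sqrt_three_sq
  rw [norm_sq_curve_two_sub_sqrt_three]
  grind

theorem norm_sq_curve_eta_sqrt_three_sub_one (a : ℝ) :
    ‖curve a ((5 + 2 * √3) / 9) (√3 - 1)‖ ^ 2 =
      1 + (3 * (2 * √3 - 3) / 4) ^ 2 * (a ^ 2 - 16 * (2 + 4 * √3) / 81) := by
  have := sqrt_three_sq
  rw [norm_sq_curve_sqrt_three_sub_one]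
  grind

theorem xi_sq : (4 * √(2 + 4 * √3) / 9) ^ 2 = 16 * (2 + 4 * √3) / 81 := by
  rw [div_pow, mul_pow, Real.sq_sqrt (by positivity)]
  ring

theorem one_lt_xi : 1 < 4 * √(2 + 4 * √3) / 9 := by
  have : 1 < √3 := by rw [Real.lt_sqrt] <;> norm_num
  have : 9 / 4 < √(2 + 4 * √3) := by rw [Real.lt_sqrt] <;> linarith
  linarith

theorem eq_xi_of_norm_sq_curve_eta_eq_one {a : ℝ} (ha : 0 < a)
    (h : ‖curve a ((5 + 2 * √3) / 9) (√3 - 1)‖ ^ 2 = 1) : a = 4 * √(2 + 4 * √3) / 9 := by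
  have : 3 / 2 < √3 := by rw [Real.lt_sqrt] <;> norm_num
  have hc : (3 * (2 * √3 - 3) / 4) ^ 2 ≠ 0 := by
    have : 0 < 2 * √3 - 3 := by linarith
    positivity
  rw [norm_sq_curve_eta_sqrt_three_sub_one, add_eq_left, mul_eq_zero, or_iff_right hc,
    sub_eq_zero, ← xi_sq] at h
  exact (sq_eq_sq₀ ha.le (by linarith [one_lt_xi])).mp h

end CubicG0HalfCircle

open CubicG0HalfCircle in
/-- For the half circle (`φ = π/2`), the pair `ξ* = 4√(2+4√3)/9`, `η* = (5+2√3)/9` is the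
unique admissible solution of the cubic `G⁰` approximation problem: the cubic Bézier
curve with control points `(0,-1)`, `(ξ*,-η*)`, `(ξ*,η*)`, `(0,1)` satisfies
`‖p₃(2-√3)‖² = 1` and `‖p₃(√3-1)‖² = 1`, with `ξ* > 1`, `η* > 0`, and it is the only
pair with these properties. -/
theorem cubic_G0_half_circle_solution
    (ξ η : ℝ) (hξ : ξ = 4 * Real.sqrt (2 + 4 * Real.sqrt 3) / 9)
    (hη : η = (5 + 2 * Real.sqrt 3) / 9)
    (p₃ : ℝ × ℝ → ℝ → EuclideanSpace ℝ (Fin 2))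
    (hp₃ : ∀ z : ℝ × ℝ, ∀ t : ℝ, p₃ z t =
      ((1 - t) / 2) ^ 3 • (!₂[0, -1] : EuclideanSpace ℝ (Fin 2)) +
      (3 * ((1 + t) / 2) * ((1 - t) / 2) ^ 2) • (!₂[z.1, -z.2] : EuclideanSpace ℝ (Fin 2)) +
      (3 * ((1 + t) / 2) ^ 2 * ((1 - t) / 2)) • (!₂[z.1, z.2] : EuclideanSpace ℝ (Fin 2)) +
      ((1 + t) / 2) ^ 3 • (!₂[0, 1] : EuclideanSpace ℝ (Fin 2))) :
    (‖p₃ (ξ, η) (2 - Real.sqrt 3)‖ ^ 2 = 1 ∧ ‖p₃ (ξ, η) (Real.sqrt 3 - 1)‖ ^ 2 = 1 ∧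
      1 < ξ ∧ 0 < η) ∧
    ∀ z : ℝ × ℝ, 1 < z.1 → 0 < z.2 →
      ‖p₃ z (2 - Real.sqrt 3)‖ ^ 2 = 1 → ‖p₃ z (Real.sqrt 3 - 1)‖ ^ 2 = 1 →
      z = (ξ, η) := by
  obtain rfl : p₃ = fun z ↦ curve z.1 z.2 := funext fun z ↦ funext (hp₃ z)
  subst hξ hη
  refine ⟨⟨?_, ?_, one_lt_xi, by positivity⟩, ?_⟩
  · rw [norm_sq_curve_eta_two_sub_sqrt_three, xi_sq]; ring
  · rw [norm_sq_curve_eta_sqrt_three_sub_one, xi_sq]; ring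
  rintro ⟨a, b⟩ (ha : 1 < a) (hb : 0 < b) h₁ h₂
  obtain rfl := eq_eta_of_norm_sq_curve_eq_one hb h₁ h₂
  exact Prod.ext (eq_xi_of_norm_sq_curve_eta_eq_one (by linarith) h₂) rfl
end

section
/- Let b = (√2 - 1)^{1/3}. For every φ ∈ (0, π/2), the quadratic function f(d; φ) = (9(b² - 1)(1 + cos 2φ) + 12b) d² - 4 sin 2φ (3b² - 2b - 3) d + 8 sin²φ ((b - 1)² - 2) has exactly one root d in (0, ∞). In particular, f(0; φ) < 0 and the leading coefficient 9(b² - 1)(1 + cos 2φ) + 12b is positive. -/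
open Real


private lemma quad_unique_pos_root (A B C : ℝ) (hA : 0 < A) (hC : C < 0) :
    ∃! d : ℝ, d ∈ Set.Ioi (0:ℝ) ∧ A * d ^ 2 - B * d + C = 0 := by
  have hD : 0 < B ^ 2 - 4 * A * C := by nlinarith [sq_nonneg B, mul_pos hA (neg_pos.mpr hC)]
  set s : ℝ := Real.sqrt (B ^ 2 - 4 * A * C) with hs_def
  have hs_sq : s ^ 2 = B ^ 2 - 4 * A * C := Real.sq_sqrt hD.le
  have hs_nonneg : 0 ≤ s := Real.sqrt_nonneg _
  have hsB : -B < s := by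
    have h4 : 0 < A * (-C) := mul_pos hA (neg_pos.mpr hC)
    have habs : |B| < s := by
      rw [hs_def, ← Real.sqrt_sq_eq_abs]
      exact Real.sqrt_lt_sqrt (sq_nonneg B) (by nlinarith)
    exact lt_of_le_of_lt (neg_le_abs B) habs
  have h2A : (2 * A) ≠ 0 := by positivity
  have hd0 : 0 < (B + s) / (2 * A) := div_pos (by linarith) (by linarith)
  have hmc : (B + s) / (2 * A) * (2 * A) = B + s := div_mul_cancel₀ _ h2A
  have hroot : A * ((B + s) / (2 * A)) ^ 2 - B * ((B + s) / (2 * A)) + C = 0 := by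
    have hAne : A ≠ 0 := ne_of_gt hA
    have expand : A * ((B + s) / (2 * A)) ^ 2 - B * ((B + s) / (2 * A)) + C
        = (s ^ 2 - (B ^ 2 - 4 * A * C)) / (4 * A) := by
      field_simp
      ring
    rw [expand, hs_sq]
    simp
  refine ⟨(B + s) / (2 * A), ⟨hd0, hroot⟩, ?_⟩
  rintro y ⟨hy, hyroot⟩
  have hy0 : 0 < y := hy
  set d₀ : ℝ := (B + s) / (2 * A)
  have hprod : (y - d₀) * (A * y * d₀ - C) = 0 := by
    linear_combination d₀ * hyroot - y * hroot
  have hpos : 0 < A * y * d₀ - C := by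
    have := mul_pos (mul_pos hA hy0) hd0
    linarith
  rcases mul_eq_zero.mp hprod with h | h
  · linarith
  · exact absurd h (by linarith)

/-- With `b = (√2 - 1)^{1/3}`, for every `φ ∈ (0, π/2)` the quadratic
`f(d;φ) = (9(b²-1)(1+cos 2φ) + 12b) d² - 4 sin 2φ (3b²-2b-3) d + 8 sin²φ ((b-1)²-2)`
has exactly one root in `(0, ∞)`. In particular `f(0;φ) < 0` and the leading
coefficient `9(b²-1)(1+cos 2φ) + 12b` is positive. -/
theorem cubic_G1_unique_positive_root
    (b : ℝ) (hb : b = (Real.sqrt 2 - 1) ^ ((1:ℝ)/3))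
    (f : ℝ → ℝ → ℝ)
    (hf : ∀ d φ : ℝ, f d φ =
      (9 * (b ^ 2 - 1) * (1 + Real.cos (2 * φ)) + 12 * b) * d ^ 2 -
        4 * Real.sin (2 * φ) * (3 * b ^ 2 - 2 * b - 3) * d +
        8 * Real.sin φ ^ 2 * ((b - 1) ^ 2 - 2)) :
    ∀ φ ∈ Set.Ioo (0:ℝ) (π / 2),
      (∃! d : ℝ, d ∈ Set.Ioi (0:ℝ) ∧ f d φ = 0) ∧
      f 0 φ < 0 ∧ 0 < 9 * (b ^ 2 - 1) * (1 + Real.cos (2 * φ)) + 12 * b := by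
  -- basic facts about b
  have hs2 : Real.sqrt 2 ^ 2 = 2 := Real.sq_sqrt (by norm_num)
  have hs2pos : (1.414 : ℝ) < Real.sqrt 2 := by
    nlinarith [Real.sqrt_nonneg 2]
  have hs2lt : Real.sqrt 2 < 1.415 := by
    nlinarith [Real.sqrt_nonneg 2]
  have hbase : (0:ℝ) < Real.sqrt 2 - 1 := by linarith
  have hbpos : 0 < b := by
    rw [hb]; exact Real.rpow_pos_of_pos hbase _
  have hb3 : b ^ 3 = Real.sqrt 2 - 1 := by
    rw [hb, ← Real.rpow_natCast ((Real.sqrt 2 - 1) ^ ((1:ℝ)/3)) 3,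
      ← Real.rpow_mul hbase.le]
    norm_num
  have hblt : b < 1 := by nlinarith [sq_nonneg b, sq_nonneg (b - 1), sq_nonneg (b + 1)]
  have hbgt : (0.72 : ℝ) < b := by nlinarith [sq_nonneg (b - 0.72), sq_nonneg (b + 1)]
  have hq : 0 < 3 * b ^ 2 + 2 * b - 3 := by nlinarith [sq_nonneg (b - 0.72)]
  intro φ hφ
  obtain ⟨hφ0, hφ2⟩ := hφ
  have hsin : 0 < Real.sin φ :=
    Real.sin_pos_of_pos_of_lt_pi hφ0 (lt_trans hφ2 (by linarith [Real.pi_pos]))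
  have hcos : Real.cos (2 * φ) ≤ 1 := Real.cos_le_one _
  set A : ℝ := 9 * (b ^ 2 - 1) * (1 + Real.cos (2 * φ)) + 12 * b with hA_def
  set B : ℝ := 4 * Real.sin (2 * φ) * (3 * b ^ 2 - 2 * b - 3) with hB_def
  set C : ℝ := 8 * Real.sin φ ^ 2 * ((b - 1) ^ 2 - 2) with hC_def
  have hA : 0 < A := by
    have h1 : b ^ 2 - 1 < 0 := by nlinarith
    nlinarith [hcos]
  have hC : C < 0 := by
    have h2 : (b - 1) ^ 2 - 2 < 0 := by nlinarith
    have := mul_pos hsin hsin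
    nlinarith
  have hfd : ∀ d : ℝ, f d φ = A * d ^ 2 - B * d + C := by
    intro d; rw [hf]
  refine ⟨?_, ?_, hA⟩
  · have key := quad_unique_pos_root A B C hA hC
    simp only [hfd]
    exact key
  · rw [hf]
    have h2 : (b - 1) ^ 2 - 2 < 0 := by nlinarith
    have := mul_pos hsin hsin
    nlinarith
end
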